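/- arXiv:2603.07871 — 7 statements merged into one kernel-verified Lean document; each statement's English description precedes it below -/
import Mathlib

section
/- Let H be a separable Hilbert space and K : [0,∞) → ℝ be a bounded continuous function with associated kernel κ(x,y) = K(‖x−y‖) assumed positive definite. If a sequence of probability measures Q_n on H converges weakly to Q, then the kernel depth D_K(x;Q_n) = ∫ K(‖x−y‖) dQ_n(y) converges to D_K(x;Q) uniformly over all x ∈ H, i.e., sup_{x∈H} |D_K(x;Q_n) − D_K(x;Q)| → 0. -/
/-!
Positive definiteness applied to the points `x, y, z` with weights `1, t, -t` gives a quadratic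
in `t` that is nonnegative, and its discriminant yields
`(K ‖x - y‖ - K ‖x - z‖)² ≤ 2 K(0) (K(0) - K ‖y - z‖)`. With continuity of `K` at `0` this makes
the integrands `y ↦ K ‖x - y‖`, `x ∈ H`, uniformly equicontinuous, and they are uniformly bounded.

On a separable space weak convergence is convergence in the Lévy–Prokhorov metric. If the
Lévy–Prokhorov distance of `μ, ν` is below `ε` and `f` oscillates by at most `ω` on `ε`-close
points, then `ε`-thickenings of superlevel sets of `f` lie in superlevel sets of `f + ω`, so the
layer-cake formula gives `|∫ f dμ - ∫ f dν| ≤ ω + 2 ε ‖f‖`, uniformly over such a family.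
-/

open MeasureTheory Set Metric Filter Topology BoundedContinuousFunction

namespace MeasureTheory

variable {Ω : Type*} [MeasurableSpace Ω] [PseudoMetricSpace Ω] [OpensMeasurableSpace Ω]

lemma BoundedContinuousFunction.integral_le_integral_add_of_levyProkhorovEDist_lt_of_nonneg
    (μ ν : Measure Ω) [IsFiniteMeasure μ] [IsFiniteMeasure ν] {ε ω : ℝ} (hε : 0 < ε)
    (hω : 0 ≤ ω) (hμν : levyProkhorovEDist μ ν < ENNReal.ofReal ε) (f : Ω →ᵇ ℝ) (hf₀ : 0 ≤ f)
    (hf : ∀ a b, dist a b < ε → f b ≤ f a + ω) :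
    ∫ a, f a ∂μ ≤ ∫ a, f a ∂ν + ω * ν.real univ + ε * ‖f‖ := by
  have hthick (t : ℝ) : thickening ε {a | t ≤ f a} ⊆ {a | t ≤ f a + ω} := by
    intro a ha
    obtain ⟨b, hb, hab⟩ := mem_thickening_iff.mp ha
    exact hb.trans (hf a b hab)
  have hlevel_int : IntegrableOn (fun t ↦ ν.real {a | t ≤ f a + ω}) (Ioc 0 (‖f‖ + ω)) := by
    have hanti : Antitone fun t ↦ ν.real {a | t ≤ f a + ω} :=
      fun s t hst ↦ measureReal_mono fun a ha ↦ hst.trans ha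
    exact (hanti.locallyIntegrable.integrableOn_isCompact isCompact_Icc).mono_set
      Ioc_subset_Icc_self
  have hlayer : ∫ a, f a + ω ∂ν = ∫ t in Ioc 0 (‖f‖ + ω), ν.real {a | t ≤ f a + ω} :=
    ((f.integrable ν).add (integrable_const ω)).integral_eq_integral_Ioc_meas_le
      (ae_of_all _ fun a ↦ add_nonneg (hf₀ a) hω)
      (ae_of_all _ fun a ↦ add_le_add_left (f.apply_le_norm a) ω)
  calc ∫ a, f a ∂μ
      ≤ (∫ t in Ioc 0 ‖f‖, ν.real (thickening ε {a | t ≤ f a})) + ε * ‖f‖ :=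
        f.integral_le_of_levyProkhorovEDist_lt μ ν hε hμν (ae_of_all _ hf₀)
    _ ≤ (∫ t in Ioc 0 ‖f‖, ν.real {a | t ≤ f a + ω}) + ε * ‖f‖ := by
        exact add_le_add (integral_mono_of_nonneg (ae_of_all _ fun t ↦ measureReal_nonneg)
          (hlevel_int.mono_set (Ioc_subset_Ioc_right (by linarith)))
          (ae_of_all _ fun t ↦ measureReal_mono (hthick t))) le_rfl
    _ ≤ (∫ t in Ioc 0 (‖f‖ + ω), ν.real {a | t ≤ f a + ω}) + ε * ‖f‖ :=
        add_le_add (setIntegral_mono_set hlevel_int (ae_of_all _ fun t ↦ measureReal_nonneg)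
          (Ioc_subset_Ioc_right (by linarith)).eventuallyLE) le_rfl
    _ = ∫ a, f a ∂ν + ω * ν.real univ + ε * ‖f‖ := by
        rw [← hlayer, integral_add (f.integrable ν) (integrable_const ω), integral_const,
          smul_eq_mul, mul_comm]

lemma BoundedContinuousFunction.integral_le_integral_add_of_levyProkhorovEDist_lt
    (μ ν : Measure Ω) [IsProbabilityMeasure μ] [IsProbabilityMeasure ν] {ε ω : ℝ} (hε : 0 < ε)
    (hω : 0 ≤ ω) (hμν : levyProkhorovEDist μ ν < ENNReal.ofReal ε) (f : Ω →ᵇ ℝ)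
    (hf : ∀ a b, dist a b < ε → dist (f a) (f b) ≤ ω) :
    ∫ a, f a ∂μ ≤ ∫ a, f a ∂ν + ω + 2 * ε * ‖f‖ := by
  -- Shifting by a constant is free for probability measures and makes `f` nonnegative.
  set g := f + const Ω ‖f‖
  have hg_apply (a : Ω) : g a = f a + ‖f‖ := rfl
  have hg₀ : 0 ≤ g := fun a ↦ by
    simpa [hg_apply, neg_le_iff_add_nonneg] using f.neg_norm_le_apply a
  have hg_norm : ‖g‖ ≤ 2 * ‖f‖ := by
    linarith [norm_add_le f (const Ω ‖f‖), (norm_const_le (α := Ω) ‖f‖).trans_eq (norm_norm f)]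
  have hg : ∀ a b, dist a b < ε → g b ≤ g a + ω := fun a b hab ↦ by
    have := hf a b hab
    rw [Real.dist_eq, abs_le] at this
    linarith [hg_apply a, hg_apply b]
  have hg_integral (ρ : Measure Ω) [IsProbabilityMeasure ρ] :
      ∫ a, g a ∂ρ = ∫ a, f a ∂ρ + ‖f‖ := by
    simp [hg_apply, integral_add (f.integrable ρ) (integrable_const ‖f‖)]
  have := g.integral_le_integral_add_of_levyProkhorovEDist_lt_of_nonneg μ ν hε hω hμν hg₀ hg
  rw [hg_integral, hg_integral, probReal_univ] at this
  linarith [mul_le_mul_of_nonneg_left hg_norm hε.le]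

lemma BoundedContinuousFunction.dist_integral_le_of_levyProkhorovEDist_lt
    (μ ν : Measure Ω) [IsProbabilityMeasure μ] [IsProbabilityMeasure ν] {ε ω : ℝ} (hε : 0 < ε)
    (hω : 0 ≤ ω) (hμν : levyProkhorovEDist μ ν < ENNReal.ofReal ε) (f : Ω →ᵇ ℝ)
    (hf : ∀ a b, dist a b < ε → dist (f a) (f b) ≤ ω) :
    dist (∫ a, f a ∂μ) (∫ a, f a ∂ν) ≤ ω + 2 * ε * ‖f‖ := by
  rw [Real.dist_eq, abs_sub_le_iff]
  constructor
  · linarith [f.integral_le_integral_add_of_levyProkhorovEDist_lt μ ν hε hω hμν hf]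
  · linarith [f.integral_le_integral_add_of_levyProkhorovEDist_lt ν μ hε hω
      (levyProkhorovEDist_comm μ ν ▸ hμν) hf]

theorem ProbabilityMeasure.tendstoUniformly_integral_of_uniformEquicontinuous
    [TopologicalSpace.SeparableSpace Ω] {ι γ : Type*} {l : Filter γ}
    {μs : γ → ProbabilityMeasure Ω} {μ : ProbabilityMeasure Ω} (hμ : Tendsto μs l (𝓝 μ))
    {F : ι → Ω →ᵇ ℝ} {C : ℝ} (hC : ∀ i, ‖F i‖ ≤ C) (hF : UniformEquicontinuous fun i ↦ ⇑(F i)) :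
    TendstoUniformly (fun n i ↦ ∫ a, F i a ∂(μs n : Measure Ω))
      (fun i ↦ ∫ a, F i a ∂(μ : Measure Ω)) l := by
  rw [Metric.tendstoUniformly_iff]
  intro ε hε
  obtain ⟨δ, hδ, hFδ⟩ := Metric.uniformEquicontinuous_iff.mp hF (ε / 2) (half_pos hε)
  obtain ⟨c, hc, hcC⟩ := exists_pos_mul_lt (half_pos hε) (2 * C)
  have hLP : Tendsto (fun n ↦ LevyProkhorov.ofMeasure (μs n)) l (𝓝 (LevyProkhorov.ofMeasure μ)) :=
    (LevyProkhorov.continuous_ofMeasure_probabilityMeasure.tendsto μ).comp hμ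
  filter_upwards [EMetric.tendsto_nhds.mp hLP (ENNReal.ofReal (min δ c)) (by simp [hδ, hc])]
    with n hn i
  have hclose := (F i).dist_integral_le_of_levyProkhorovEDist_lt (μs n : Measure Ω) μ
    (lt_min hδ hc) (half_pos hε).le hn fun a b hab ↦ (hFδ a b (hab.trans_le (min_le_left δ c)) i).le
  have hslack : 2 * min δ c * ‖F i‖ ≤ 2 * c * C := by
    gcongr
    exacts [min_le_right δ c, hC i]
  rw [dist_comm]
  linarith

end MeasureTheory

def IsPosDefRadialKernel (E : Type*) [SeminormedAddCommGroup E] (K : ℝ → ℝ) : Prop :=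
  ∀ (m : ℕ) (xs : Fin m → E) (a : Fin m → ℝ), 0 ≤ ∑ i, ∑ j, a i * a j * K ‖xs i - xs j‖

namespace IsPosDefRadialKernel

variable {E : Type*} [SeminormedAddCommGroup E] {K : ℝ → ℝ}

lemma sq_sub_le (hK : IsPosDefRadialKernel E K) (x y z : E) :
    (K ‖x - y‖ - K ‖x - z‖) ^ 2 ≤ 2 * K 0 * (K 0 - K ‖y - z‖) := by
  have hquad (t : ℝ) :
      0 ≤ 2 * (K 0 - K ‖y - z‖) * (t * t) + 2 * (K ‖x - y‖ - K ‖x - z‖) * t + K 0 := by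
    have h := hK 3 ![x, y, z] ![1, t, -t]
    simp only [Fin.sum_univ_three, Matrix.cons_val_zero, Matrix.cons_val_one,
      Matrix.cons_val_two, Matrix.head_cons, Matrix.tail_cons, sub_self, norm_zero] at h
    rw [norm_sub_rev y x, norm_sub_rev z x, norm_sub_rev z y] at h
    linarith
  have := discrim_le_zero hquad
  rw [discrim] at this
  linarith

lemma uniformEquicontinuous (hK : IsPosDefRadialKernel E K) (hKc : Continuous K) :
    UniformEquicontinuous fun x y : E ↦ K ‖x - y‖ := by
  rw [Metric.uniformEquicontinuous_iff]
  intro ε hε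
  have hlim : Tendsto (fun s ↦ 2 * K 0 * (K 0 - K s)) (𝓝 0) (𝓝 0) := by
    simpa using ((hKc.tendsto 0).const_sub (K 0)).const_mul (2 * K 0)
  obtain ⟨δ, hδ, hδK⟩ := Metric.tendsto_nhds_nhds.mp hlim (ε ^ 2) (by positivity)
  refine ⟨δ, hδ, fun y z hyz x ↦ ?_⟩
  have hsmall : 2 * K 0 * (K 0 - K ‖y - z‖) < ε ^ 2 := by
    have := hδK (x := ‖y - z‖) (by simpa [← dist_eq_norm] using hyz)
    exact (le_abs_self _).trans_lt (by simpa [Real.dist_eq] using this)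
  rw [Real.dist_eq]
  exact abs_lt_of_sq_lt_sq ((hK.sq_sub_le x y z).trans_lt hsmall) hε.le

end IsPosDefRadialKernel

theorem kernel_depth_uniform_continuity_in_measure_general
    {H : Type*} [NormedAddCommGroup H]
    [TopologicalSpace.SeparableSpace H] [MeasurableSpace H] [BorelSpace H]
    (K : ℝ → ℝ) (hKcont : Continuous K) (C : ℝ) (hKbdd : ∀ t, |K t| ≤ C)
    (hKposdef : ∀ (m : ℕ) (xs : Fin m → H) (a : Fin m → ℝ),
      0 ≤ ∑ i, ∑ j, a i * a j * K ‖xs i - xs j‖)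
    (Q : ℕ → ProbabilityMeasure H) (Q₀ : ProbabilityMeasure H)
    (hQ : Filter.Tendsto Q Filter.atTop (nhds Q₀)) :
    ∀ ε > 0, ∃ N : ℕ, ∀ n ≥ N, ∀ x : H,
      |(∫ y, K ‖x - y‖ ∂(Q n : Measure H)) - ∫ y, K ‖x - y‖ ∂(Q₀ : Measure H)| < ε := by
  have hC : 0 ≤ C := (abs_nonneg _).trans (hKbdd 0)
  let depthIntegrand (x : H) : H →ᵇ ℝ :=
    .ofNormedAddCommGroup (fun y ↦ K ‖x - y‖) (by fun_prop) C fun y ↦ hKbdd _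
  have hunif := ProbabilityMeasure.tendstoUniformly_integral_of_uniformEquicontinuous hQ
    (F := depthIntegrand) (fun x ↦ norm_ofNormedAddCommGroup_le _ hC _)
    (IsPosDefRadialKernel.uniformEquicontinuous hKposdef hKcont)
  intro ε hε
  obtain ⟨N, hN⟩ := eventually_atTop.mp (Metric.tendstoUniformly_iff.mp hunif ε hε)
  refine ⟨N, fun n hn x ↦ ?_⟩
  rw [← Real.dist_eq, dist_comm]
  exact hN n hn x

/-- Kernel depth: uniform (over all points) continuity in the probability measure,
for a bounded continuous positive definite kernel κ(x,y) = K(‖x−y‖). -/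
theorem kernel_depth_uniform_continuity_in_measure
    {H : Type*} [NormedAddCommGroup H] [InnerProductSpace ℝ H] [CompleteSpace H]
    [TopologicalSpace.SeparableSpace H] [MeasurableSpace H] [BorelSpace H]
    (K : ℝ → ℝ) (hKcont : Continuous K) (C : ℝ) (hKbdd : ∀ t, |K t| ≤ C)
    (hKposdef : ∀ (m : ℕ) (xs : Fin m → H) (a : Fin m → ℝ),
      0 ≤ ∑ i, ∑ j, a i * a j * K ‖xs i - xs j‖)
    (Q : ℕ → ProbabilityMeasure H) (Q₀ : ProbabilityMeasure H)
    (hQ : Filter.Tendsto Q Filter.atTop (nhds Q₀)) :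
    ∀ ε > 0, ∃ N : ℕ, ∀ n ≥ N, ∀ x : H,
      |(∫ y, K ‖x - y‖ ∂(Q n : Measure H)) - ∫ y, K ‖x - y‖ ∂(Q₀ : Measure H)| < ε :=
  kernel_depth_uniform_continuity_in_measure_general K hKcont C hKbdd hKposdef Q Q₀ hQ
end

section
/- Let H be a separable Hilbert space and κ : H × H → ℝ a bounded continuous kernel. For probability measures P, Q on H, define ⟨P,Q⟩_κ = ∫∫ κ(x,y) dP(x) dQ(y) and the maximum mean discrepancy ‖P − Q‖_κ = (⟨P,P⟩_κ − 2⟨P,Q⟩_κ + ⟨Q,Q⟩_κ)^{1/2}. If P_n converges weakly to P, then ‖P_n − P‖_κ → 0. -/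
open MeasureTheory Filter Topology TopologicalSpace BoundedContinuousFunction

theorem MeasureTheory.ProbabilityMeasure.continuous_integral_integral_of_abs_le
    {α β : Type*} [TopologicalSpace α] [TopologicalSpace β]
    [SecondCountableTopology α] [SecondCountableTopology β]
    [PseudoMetrizableSpace α] [PseudoMetrizableSpace β]
    [MeasurableSpace α] [MeasurableSpace β] [OpensMeasurableSpace α] [OpensMeasurableSpace β]
    {κ : α → β → ℝ} (hκ : Continuous (Function.uncurry κ)) {C : ℝ} (hC : ∀ x y, |κ x y| ≤ C) :
    Continuous fun μ : ProbabilityMeasure α × ProbabilityMeasure β ↦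
      ∫ x, ∫ y, κ x y ∂(μ.2 : Measure β) ∂(μ.1 : Measure α) := by
  let F : α × β →ᵇ ℝ := .ofNormedAddCommGroup _ hκ C fun p ↦ hC p.1 p.2
  have hFubini : ∀ μ : ProbabilityMeasure α × ProbabilityMeasure β,
      ∫ x, ∫ y, κ x y ∂(μ.2 : Measure β) ∂(μ.1 : Measure α)
        = ∫ p, F p ∂(μ.1.prod μ.2 : Measure (α × β)) := fun μ ↦
    (integral_prod _ (F.integrable _)).symm
  simp_rw [hFubini]
  exact (continuous_integral_boundedContinuousFunction F).comp continuous_prod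

theorem weak_convergence_implies_MMD_convergence_general
    {H : Type*} [NormedAddCommGroup H]
    [TopologicalSpace.SeparableSpace H] [MeasurableSpace H] [BorelSpace H]
    (κ : H → H → ℝ) (hκcont : Continuous fun p : H × H => κ p.1 p.2)
    (C : ℝ) (hκbdd : ∀ x y, |κ x y| ≤ C)
    (P : ℕ → ProbabilityMeasure H) (P₀ : ProbabilityMeasure H)
    (hP : Filter.Tendsto P Filter.atTop (nhds P₀))
    (inner_κ : ProbabilityMeasure H → ProbabilityMeasure H → ℝ)
    (hinner : ∀ Q Q', inner_κ Q Q'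
      = ∫ x, ∫ y, κ x y ∂(Q' : Measure H) ∂(Q : Measure H))
    (mmd : ProbabilityMeasure H → ProbabilityMeasure H → ℝ)
    (hmmd : ∀ Q Q', mmd Q Q'
      = Real.sqrt (inner_κ Q Q - 2 * inner_κ Q Q' + inner_κ Q' Q')) :
    Filter.Tendsto (fun n => mmd (P n) P₀) Filter.atTop (nhds 0) := by
  have hinner_cont : Continuous fun Q : ProbabilityMeasure H × ProbabilityMeasure H ↦
      inner_κ Q.1 Q.2 := by
    simp_rw [hinner]
    exact ProbabilityMeasure.continuous_integral_integral_of_abs_le hκcont hκbdd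
  have hmmd_cont : Continuous fun Q ↦ mmd Q P₀ := by
    simp_rw [hmmd]
    fun_prop
  have hmmd_self : mmd P₀ P₀ = 0 := by
    rw [hmmd]
    ring_nf
    exact Real.sqrt_zero
  simpa only [hmmd_self, Function.comp_def] using (hmmd_cont.tendsto P₀).comp hP

/-- Weak convergence of probability measures implies convergence in maximum mean
discrepancy, for a bounded continuous (symmetric positive definite) kernel. -/
theorem weak_convergence_implies_MMD_convergence
    {H : Type*} [NormedAddCommGroup H] [InnerProductSpace ℝ H] [CompleteSpace H]
    [TopologicalSpace.SeparableSpace H] [MeasurableSpace H] [BorelSpace H]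
    (κ : H → H → ℝ) (hκcont : Continuous fun p : H × H => κ p.1 p.2)
    (C : ℝ) (hκbdd : ∀ x y, |κ x y| ≤ C)
    (hκsymm : ∀ x y, κ x y = κ y x)
    (hκposdef : ∀ (m : ℕ) (xs : Fin m → H) (a : Fin m → ℝ),
      0 ≤ ∑ i, ∑ j, a i * a j * κ (xs i) (xs j))
    (P : ℕ → ProbabilityMeasure H) (P₀ : ProbabilityMeasure H)
    (hP : Filter.Tendsto P Filter.atTop (nhds P₀))
    (inner_κ : ProbabilityMeasure H → ProbabilityMeasure H → ℝ)
    (hinner : ∀ Q Q', inner_κ Q Q'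
      = ∫ x, ∫ y, κ x y ∂(Q' : Measure H) ∂(Q : Measure H))
    (mmd : ProbabilityMeasure H → ProbabilityMeasure H → ℝ)
    (hmmd : ∀ Q Q', mmd Q Q'
      = Real.sqrt (inner_κ Q Q - 2 * inner_κ Q Q' + inner_κ Q' Q')) :
    Filter.Tendsto (fun n => mmd (P n) P₀) Filter.atTop (nhds 0) :=
  weak_convergence_implies_MMD_convergence_general κ hκcont C hκbdd P P₀ hP inner_κ hinner mmd hmmd
end

section
/- Let P_n weakly converge to P on H and P̂_n (random probability measures) satisfy π(P̂_n, P_n) → 0 in probability, where π is the Prohorov metric. Suppose a depth function D : H × P(H) → ℝ satisfies: (i) for x_n → x in H, sup_Q |D(x_n;Q) − D(x;Q)| → 0; (ii) for Q_n weakly converging to Q, sup_x |D(x;Q_n) − D(x;Q)| → 0; and (iii) for T ∼ P, the CDF of D(T;P) is continuous. Let T_n ∼ P_n, T*_n ∼ P̂_n (conditionally), F_n(u) = Pr(D(T_n;P_n) ≤ u), and F̂_n(u) = Pr*(D(T*_n;P̂_n) ≤ u). Then sup_{u∈ℝ} |F̂_n(u) − F_n(u)| → 0 in probability. -/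
/-!
Uniform convergence of `D(x; Q) → D(x; P₀)` in `x` sandwiches `{D(·; Q) ≤ u}` between sublevel
sets of the fixed continuous function `D(·; P₀)`, whose frontiers are `P₀`-null because the limit
CDF has no atoms; the portmanteau theorem then gives pointwise convergence of the depth CDFs
`F_Q → F_{P₀}` as `Q → P₀` weakly, and Pólya's theorem (the limit CDF is continuous) makes it
uniform. Since the Lévy–Prokhorov metric metrizes weak convergence, `sup_u |F_Q - F_{P₀}|` is
small as soon as `π(Q, P₀)` is, and both `P n` and, off an event of vanishing probability,
`Phat n` are that close to `P₀`.
-/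

open MeasureTheory Filter Topology Set ProbabilityTheory

section Polya

variable {F : ℝ → ℝ}

lemma exists_finset_lower_bracket (hF : Monotone F) (hc : Continuous F)
    (h0 : Tendsto F atBot (𝓝 0)) (h1 : Tendsto F atTop (𝓝 1)) {ε : ℝ} (hε : 0 < ε) :
    ∃ S : Finset ℝ, ∀ u, F u ≤ ε ∨ ∃ s ∈ S, s ≤ u ∧ F u ≤ F s + ε := by
  obtain ⟨m, hm⟩ := exists_nat_one_div_lt hε
  have hlevel : ∀ c ∈ Ioo (0 : ℝ) 1, ∃ v, F v = c := fun c hc₀₁ =>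
    mem_range_of_exists_le_of_exists_ge hc (h0.eventually (eventually_le_nhds hc₀₁.1)).exists
      (h1.eventually (eventually_ge_nhds hc₀₁.2)).exists
  choose! v hv using hlevel
  refine ⟨(Finset.range (m + 1)).image fun j : ℕ => v (j / (m + 1)), fun u => ?_⟩
  rcases le_or_gt (F u) ε with hu | hu
  · exact .inl hu
  right
  have hFu : F u ≤ 1 := hF.ge_of_tendsto h1 u
  have hmFu : 0 < (m + 1 : ℝ) * F u := by have := hε.trans hu; positivity
  -- the witness is the point `v (j / (m + 1))` at the level just below `F u`
  obtain ⟨j, hj⟩ := Nat.exists_eq_add_one_of_ne_zero (Nat.ceil_pos.2 hmFu).ne'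
  have hceil := Nat.le_ceil ((m + 1 : ℝ) * F u)
  have hceil' := Nat.ceil_lt_add_one hmFu.le
  rw [hj] at hceil hceil'
  push_cast at hceil hceil'
  have hm' : 1 < (m + 1 : ℝ) * ε := by
    rw [div_lt_iff₀ (by positivity)] at hm; linarith
  have hc : (j : ℝ) / (m + 1) ∈ Ioo (0 : ℝ) 1 := by
    constructor
    · apply div_pos _ (by positivity); nlinarith
    · rw [div_lt_one (by positivity)]; nlinarith
  have hlt : (j : ℝ) / (m + 1) < F u := by rw [div_lt_iff₀ (by positivity)]; linarith
  refine ⟨v (j / (m + 1)), Finset.mem_image.2 ⟨j, Finset.mem_range.2 ?_, rfl⟩, ?_, ?_⟩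
  · exact_mod_cast (show (j : ℝ) < m + 1 by nlinarith)
  · exact (hF.reflect_lt ((hv _ hc).symm ▸ hlt)).le
  · have : F u ≤ j / (m + 1) + 1 / (m + 1) := by
      rw [← add_div, le_div_iff₀ (by positivity)]; linarith
    rw [hv _ hc]; linarith

lemma exists_finset_upper_bracket (hF : Monotone F) (hc : Continuous F)
    (h0 : Tendsto F atBot (𝓝 0)) (h1 : Tendsto F atTop (𝓝 1)) {ε : ℝ} (hε : 0 < ε) :
    ∃ T : Finset ℝ, ∀ u, 1 - ε ≤ F u ∨ ∃ t ∈ T, u ≤ t ∧ F t ≤ F u + ε := by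
  have hF' : Monotone fun u => 1 - F (-u) := fun u v huv => by
    have := hF (neg_le_neg huv); simp only; linarith
  obtain ⟨S, hS⟩ := exists_finset_lower_bracket hF' (by fun_prop)
    (by simpa using (h1.comp tendsto_neg_atBot_atTop).const_sub 1)
    (by simpa using (h0.comp tendsto_neg_atTop_atBot).const_sub 1) hε
  refine ⟨S.image Neg.neg, fun u => ?_⟩
  rcases hS (-u) with hu | ⟨s, hs, hsu, hFs⟩
  · left; simp only [neg_neg] at hu; linarith
  · right; refine ⟨-s, Finset.mem_image_of_mem _ hs, le_neg_of_le_neg hsu, ?_⟩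
    simp only [neg_neg] at hFs; linarith

theorem tendstoUniformly_of_monotone_of_tendsto {ι : Type*} {l : Filter ι} {G : ι → ℝ → ℝ}
    (hF : Monotone F) (hc : Continuous F) (h0 : Tendsto F atBot (𝓝 0))
    (h1 : Tendsto F atTop (𝓝 1)) (hG : ∀ i, Monotone (G i)) (hG0 : ∀ i u, 0 ≤ G i u)
    (hG1 : ∀ i u, G i u ≤ 1) (hlim : ∀ u, Tendsto (fun i => G i u) l (𝓝 (F u))) :
    TendstoUniformly G F l := by
  rw [Metric.tendstoUniformly_iff]
  intro ε hε
  obtain ⟨S, hS⟩ := exists_finset_lower_bracket hF hc h0 h1 (by positivity : 0 < ε / 3)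
  obtain ⟨T, hT⟩ := exists_finset_upper_bracket hF hc h0 h1 (by positivity : 0 < ε / 3)
  have hclose : ∀ᶠ i in l, ∀ s ∈ S ∪ T, |G i s - F s| < ε / 3 :=
    (eventually_all_finset _).2 fun s _ =>
      (Metric.tendsto_nhds.1 (hlim s) (ε / 3) (by positivity)).mono fun i hi => by
        rwa [← Real.dist_eq]
  filter_upwards [hclose] with i hi u
  rw [dist_comm, Real.dist_eq, abs_sub_lt_iff]
  constructor
  · rcases hT u with hu | ⟨t, ht, hut, hFt⟩
    · linarith [hG1 i u]
    · linarith [hG i hut, (abs_sub_lt_iff.1 (hi t (Finset.mem_union_right _ ht))).1]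
  · rcases hS u with hu | ⟨s, hs, hsu, hFs⟩
    · linarith [hG0 i u]
    · linarith [hG i hsu, (abs_sub_lt_iff.1 (hi s (Finset.mem_union_left _ hs))).2]

end Polya

lemma cdf_map_apply {X : Type*} [MeasurableSpace X] (μ : Measure X) [IsProbabilityMeasure μ]
    {g : X → ℝ} (hg : Measurable g) (u : ℝ) :
    cdf (μ.map g) u = (μ {x | g x ≤ u}).toReal := by
  have := Measure.isProbabilityMeasure_map (μ := μ) hg.aemeasurable
  rw [cdf_eq_real, measureReal_def, Measure.map_apply hg measurableSet_Iic]
  rfl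

lemma measure_singleton_eq_zero_of_continuousAt_cdf (ν : Measure ℝ) [IsProbabilityMeasure ν]
    {u : ℝ} (h : ContinuousAt (cdf ν) u) : ν {u} = 0 := by
  rw [← measure_cdf ν, StieltjesFunction.measure_singleton, h.continuousWithinAt.leftLim_eq,
    sub_self, ENNReal.ofReal_zero]

lemma measure_setOf_eq_eq_zero_of_continuous {X : Type*} [MeasurableSpace X] (μ : Measure X)
    [IsProbabilityMeasure μ] {g : X → ℝ} (hg : Measurable g)
    (hcdf : Continuous fun u => (μ {x | g x ≤ u}).toReal) (v : ℝ) : μ {x | g x = v} = 0 := by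
  have := Measure.isProbabilityMeasure_map (μ := μ) hg.aemeasurable
  have hcont : Continuous (cdf (μ.map g)) := by
    simpa only [funext (cdf_map_apply μ hg)] using hcdf
  have := measure_singleton_eq_zero_of_continuousAt_cdf _ (hcont.continuousAt (x := v))
  rwa [Measure.map_apply hg (measurableSet_singleton v)] at this

section Portmanteau

variable {X ι : Type*} [TopologicalSpace X] [MeasurableSpace X] [OpensMeasurableSpace X]
  [HasOuterApproxClosed X] {l : Filter ι} {Q : ι → ProbabilityMeasure X} {P : ProbabilityMeasure X}

lemma tendsto_measure_setOf_le (hQ : Tendsto Q l (𝓝 P)) {g : X → ℝ} (hg : Continuous g) {u : ℝ}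
    (hu : (P : Measure X) {x | g x = u} = 0) :
    Tendsto (fun i => ((Q i : Measure X) {x | g x ≤ u}).toReal) l
      (𝓝 ((P : Measure X) {x | g x ≤ u}).toReal) :=
  (ENNReal.tendsto_toReal (measure_ne_top _ _)).comp
    (ProbabilityMeasure.tendsto_measure_of_null_frontier_of_tendsto' hQ
      (measure_mono_null (frontier_le_subset_eq hg continuous_const) hu))

theorem tendsto_measure_setOf_le_of_tendstoUniformly (hQ : Tendsto Q l (𝓝 P))
    {g : ι → X → ℝ} {g₀ : X → ℝ} (hg : TendstoUniformly g g₀ l) (hg₀ : Continuous g₀)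
    (hcdf : Continuous fun u => ((P : Measure X) {x | g₀ x ≤ u}).toReal) (u : ℝ) :
    Tendsto (fun i => ((Q i : Measure X) {x | g i x ≤ u}).toReal) l
      (𝓝 ((P : Measure X) {x | g₀ x ≤ u}).toReal) := by
  have hlim (v : ℝ) := tendsto_measure_setOf_le hQ hg₀
    (measure_setOf_eq_eq_zero_of_continuous _ hg₀.measurable hcdf v)
  have hclose {ρ : ℝ} (hρ : 0 < ρ) : ∀ᶠ i in l, ∀ x, |g₀ x - g i x| < ρ := by
    simpa only [Real.dist_eq] using Metric.tendstoUniformly_iff.1 hg ρ hρ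
  -- `{g₀ ≤ v} ⊆ {g i ≤ u} ⊆ {g₀ ≤ w}` once `g i` is uniformly within `u - v` and `w - u` of `g₀`
  refine tendsto_order.2 ⟨fun a ha => ?_, fun a ha => ?_⟩
  · obtain ⟨v, hvu, hav⟩ := ((hcdf.tendsto u).eventually (lt_mem_nhds ha)).exists_lt
    filter_upwards [(hlim v).eventually (lt_mem_nhds hav), hclose (sub_pos.2 hvu)] with i hi hgi
    refine hi.trans_le (ENNReal.toReal_mono (measure_ne_top _ _) (measure_mono fun x hx => ?_))
    exact show g i x ≤ u by linarith [(abs_sub_lt_iff.1 (hgi x)).2, show g₀ x ≤ v from hx]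
  · obtain ⟨w, huw, haw⟩ := ((hcdf.tendsto u).eventually (gt_mem_nhds ha)).exists_gt
    filter_upwards [(hlim w).eventually (gt_mem_nhds haw), hclose (sub_pos.2 huw)] with i hi hgi
    refine (ENNReal.toReal_mono (measure_ne_top _ _) (measure_mono fun x hx => ?_)).trans_lt hi
    exact show g₀ x ≤ w by linarith [(abs_sub_lt_iff.1 (hgi x)).1, show g i x ≤ u from hx]

end Portmanteau

lemma tendstoUniformly_nhds_of_seq {Y X : Type*} [TopologicalSpace Y] [FirstCountableTopology Y]
    {f : Y → X → ℝ} {y₀ : Y}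
    (h : ∀ y : ℕ → Y, Tendsto y atTop (𝓝 y₀) →
      ∀ ε > 0, ∃ N : ℕ, ∀ n ≥ N, ∀ x, |f (y n) x - f y₀ x| < ε) :
    TendstoUniformly f (f y₀) (𝓝 y₀) := by
  refine tendstoUniformly_iff_seq_tendstoUniformly.2 fun y hy => ?_
  refine Metric.tendstoUniformly_iff.2 fun ε hε => ?_
  obtain ⟨N, hN⟩ := h y hy ε hε
  filter_upwards [eventually_ge_atTop N] with n hn x
  rw [dist_comm]
  exact hN n hn x

section LevyProkhorov
variable {Ω : Type*} [PseudoMetricSpace Ω] [MeasurableSpace Ω] [OpensMeasurableSpace Ω]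

lemma Filter.Eventually.exists_forall_levyProkhorovDist_lt {P₀ : ProbabilityMeasure Ω}
    {p : ProbabilityMeasure Ω → Prop} (h : ∀ᶠ Q in 𝓝 P₀, p Q) :
    ∃ δ > 0, ∀ Q : ProbabilityMeasure Ω, levyProkhorovDist (Q : Measure Ω) P₀ < δ → p Q := by
  have := LevyProkhorov.continuous_toMeasure_probabilityMeasure.continuousAt
    (x := LevyProkhorov.ofMeasure P₀) h
  obtain ⟨δ, hδ, hball⟩ := Metric.eventually_nhds_iff.1 this
  exact ⟨δ, hδ, fun Q hQ => hball (y := LevyProkhorov.ofMeasure Q) hQ⟩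

lemma tendsto_levyProkhorovDist_of_tendsto [TopologicalSpace.SeparableSpace Ω]
    {P : ℕ → ProbabilityMeasure Ω} {P₀ : ProbabilityMeasure Ω} (hP : Tendsto P atTop (𝓝 P₀)) :
    Tendsto (fun n => levyProkhorovDist (P n : Measure Ω) P₀) atTop (𝓝 0) :=
  tendsto_iff_dist_tendsto_zero.1
    ((LevyProkhorov.continuous_ofMeasure_probabilityMeasure.tendsto P₀).comp hP)

end LevyProkhorov

def depthCDF {X : Type*} [MeasurableSpace X] (D : X → ProbabilityMeasure X → ℝ)
    (Q : ProbabilityMeasure X) (u : ℝ) : ℝ :=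
  ((Q : Measure X) {x | D x Q ≤ u}).toReal

theorem tendstoUniformly_depthCDF {X : Type*} [TopologicalSpace X] [MeasurableSpace X]
    [OpensMeasurableSpace X] [HasOuterApproxClosed X] {D : X → ProbabilityMeasure X → ℝ}
    {P₀ : ProbabilityMeasure X}
    (hD : TendstoUniformly (fun Q x => D x Q) (fun x => D x P₀) (𝓝 P₀))
    (hD₀ : Continuous fun x => D x P₀) (hcdf : Continuous (depthCDF D P₀)) :
    TendstoUniformly (depthCDF D) (depthCDF D P₀) (𝓝 P₀) := by
  set ν := (P₀ : Measure X).map fun x => D x P₀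
  have : IsProbabilityMeasure ν := Measure.isProbabilityMeasure_map hD₀.measurable.aemeasurable
  have hν : ⇑(cdf ν) = depthCDF D P₀ := funext (cdf_map_apply _ hD₀.measurable)
  refine tendstoUniformly_of_monotone_of_tendsto (hν ▸ (cdf ν).mono) hcdf
    (hν ▸ tendsto_cdf_atBot ν) (hν ▸ tendsto_cdf_atTop ν) (fun Q u v huv => ?_)
    (fun _ _ => ENNReal.toReal_nonneg) (fun _ _ => measureReal_le_one)
    (tendsto_measure_setOf_le_of_tendstoUniformly tendsto_id hD hD₀ hcdf)
  exact ENNReal.toReal_mono (measure_ne_top _ _) (measure_mono fun x hx => le_trans hx huv)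

theorem depth_statistic_bootstrap_validity_general
    {H : Type*} [NormedAddCommGroup H]
    [TopologicalSpace.SeparableSpace H] [MeasurableSpace H] [BorelSpace H]
    {Ω : Type*} [MeasurableSpace Ω] (μ : Measure Ω) [IsProbabilityMeasure μ]
    (D : H → ProbabilityMeasure H → ℝ)
    -- (C1): the sampling distributions converge weakly to a limit `P₀`
    (P : ℕ → ProbabilityMeasure H) (P₀ : ProbabilityMeasure H)
    (hP : Filter.Tendsto P Filter.atTop (nhds P₀))
    -- (C2): the random resampling distributions are consistent in probability
    (Phat : ℕ → Ω → ProbabilityMeasure H)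
    (hPhat : ∀ ε > 0, Filter.Tendsto
      (fun n => (μ {ω | ε ≤ levyProkhorovDist
        ((Phat n ω : Measure H)) ((P n : Measure H))}).toReal)
      Filter.atTop (nhds 0))
    -- (C3): uniform continuity of the depth in the point
    (hDpoint : ∀ (x : ℕ → H) (x₀ : H), Filter.Tendsto x Filter.atTop (nhds x₀) →
      ∀ ε > 0, ∃ N : ℕ, ∀ n ≥ N, ∀ Q : ProbabilityMeasure H,
        |D (x n) Q - D x₀ Q| < ε)
    -- (C4): uniform continuity of the depth in the probability measure
    (hDmeas : ∀ (Q : ℕ → ProbabilityMeasure H) (Q₀ : ProbabilityMeasure H),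
      Filter.Tendsto Q Filter.atTop (nhds Q₀) →
      ∀ ε > 0, ∃ N : ℕ, ∀ n ≥ N, ∀ x : H, |D x (Q n) - D x Q₀| < ε)
    -- (C5): the CDF of `D(T;P₀)` for `T ∼ P₀` is continuous
    (hlimCDF : Continuous fun u : ℝ => ((P₀ : Measure H) {x | D x P₀ ≤ u}).toReal)
    -- the CDFs of the depth statistic and its bootstrap version
    (F : ℕ → ℝ → ℝ)
    (hF : ∀ n u, F n u = ((P n : Measure H) {x | D x (P n) ≤ u}).toReal)
    (Fhat : ℕ → Ω → ℝ → ℝ)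
    (hFhat : ∀ n ω u, Fhat n ω u
      = ((Phat n ω : Measure H) {x | D x (Phat n ω) ≤ u}).toReal) :
    ∀ ε > 0, Filter.Tendsto
      (fun n => (μ {ω | ε ≤ ⨆ u : ℝ, |Fhat n ω u - F n u|}).toReal)
      Filter.atTop (nhds 0) := by
  intro ε hε
  have hD₀ : Continuous fun x => D x P₀ := continuous_iff_seqContinuous.2 fun x x₀ hx =>
    Metric.tendsto_atTop.2 fun η hη => (hDpoint x x₀ hx η hη).imp fun N hN n hn => hN n hn P₀
  have hD := tendstoUniformly_nhds_of_seq (f := fun Q x => D x Q) fun Q hQ => hDmeas Q P₀ hQ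
  obtain ⟨δ, hδ, hclose⟩ := (Metric.tendstoUniformly_iff.1 (tendstoUniformly_depthCDF hD hD₀
    hlimCDF) (ε / 3) (by positivity)).exists_forall_levyProkhorovDist_lt
  refine squeeze_zero' (.of_forall fun n => ENNReal.toReal_nonneg) ?_ (hPhat (δ / 2) (half_pos hδ))
  filter_upwards [(tendsto_levyProkhorovDist_of_tendsto hP).eventually (gt_mem_nhds (half_pos hδ))]
    with n hn
  refine ENNReal.toReal_mono (measure_ne_top _ _) (measure_mono fun ω (hω : ε ≤ _) => ?_)
  show δ / 2 ≤ _
  by_contra! hfar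
  have hboot := hclose (Phat n ω)
    ((levyProkhorovDist_triangle _ (P n : Measure H) _).trans_lt (by linarith))
  have hsample := hclose (P n) (hn.trans (half_lt_self hδ))
  have hsup : (⨆ u, |Fhat n ω u - F n u|) ≤ 2 * (ε / 3) := ciSup_le fun u => by
    rw [hF, hFhat]
    change dist (depthCDF D (Phat n ω) u) (depthCDF D (P n) u) ≤ _
    linarith [dist_triangle_left (depthCDF D (Phat n ω) u) (depthCDF D (P n) u) (depthCDF D P₀ u),
      hboot u, hsample u]
  exact absurd hω (not_le.2 (hsup.trans_lt (by linarith)))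

/-- Main bootstrap validity theorem for depth statistics: if `P_n ⇒ P` weakly,
the random (bootstrap) measures `P̂_n` satisfy `π(P̂_n, P_n) → 0` in probability
(Prohorov/Lévy–Prokhorov metric), the depth `D` is uniformly continuous in the
point (uniformly over measures) and in the measure (uniformly over points), and
the CDF of `D(T;P)` for `T ∼ P` is continuous, then the bootstrap depth-statistic
CDFs converge to the true ones uniformly, in probability. -/
theorem depth_statistic_bootstrap_validity
    {H : Type*} [NormedAddCommGroup H] [InnerProductSpace ℝ H] [CompleteSpace H]
    [TopologicalSpace.SeparableSpace H] [MeasurableSpace H] [BorelSpace H]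
    {Ω : Type*} [MeasurableSpace Ω] (μ : Measure Ω) [IsProbabilityMeasure μ]
    (D : H → ProbabilityMeasure H → ℝ)
    -- (C1): the sampling distributions converge weakly to a limit `P₀`
    (P : ℕ → ProbabilityMeasure H) (P₀ : ProbabilityMeasure H)
    (hP : Filter.Tendsto P Filter.atTop (nhds P₀))
    -- (C2): the random resampling distributions are consistent in probability
    (Phat : ℕ → Ω → ProbabilityMeasure H)
    (hPhat : ∀ ε > 0, Filter.Tendsto
      (fun n => (μ {ω | ε ≤ levyProkhorovDist
        ((Phat n ω : Measure H)) ((P n : Measure H))}).toReal)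
      Filter.atTop (nhds 0))
    -- (C3): uniform continuity of the depth in the point
    (hDpoint : ∀ (x : ℕ → H) (x₀ : H), Filter.Tendsto x Filter.atTop (nhds x₀) →
      ∀ ε > 0, ∃ N : ℕ, ∀ n ≥ N, ∀ Q : ProbabilityMeasure H,
        |D (x n) Q - D x₀ Q| < ε)
    -- (C4): uniform continuity of the depth in the probability measure
    (hDmeas : ∀ (Q : ℕ → ProbabilityMeasure H) (Q₀ : ProbabilityMeasure H),
      Filter.Tendsto Q Filter.atTop (nhds Q₀) →
      ∀ ε > 0, ∃ N : ℕ, ∀ n ≥ N, ∀ x : H, |D x (Q n) - D x Q₀| < ε)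
    -- (C5): the CDF of `D(T;P₀)` for `T ∼ P₀` is continuous
    (hlimCDF : Continuous fun u : ℝ => ((P₀ : Measure H) {x | D x P₀ ≤ u}).toReal)
    -- the CDFs of the depth statistic and its bootstrap version
    (F : ℕ → ℝ → ℝ)
    (hF : ∀ n u, F n u = ((P n : Measure H) {x | D x (P n) ≤ u}).toReal)
    (Fhat : ℕ → Ω → ℝ → ℝ)
    (hFhat : ∀ n ω u, Fhat n ω u
      = ((Phat n ω : Measure H) {x | D x (Phat n ω) ≤ u}).toReal) :
    ∀ ε > 0, Filter.Tendsto
      (fun n => (μ {ω | ε ≤ ⨆ u : ℝ, |Fhat n ω u - F n u|}).toReal)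
      Filter.atTop (nhds 0) :=
  depth_statistic_bootstrap_validity_general μ D P P₀ hP Phat hPhat hDpoint hDmeas hlimCDF F hF Fhat
    hFhat
end

section
/- Under the assumptions of the previous setting (Conditions (C1)–(C5)), with D̂T_n = D(T_n; P̂_n) and resampling CDF F̂_n, the resampling depth p-value π̂_n = F̂_n(D̂T_n) converges in distribution to the standard uniform distribution on (0,1). -/
/-!
Write `G = D(·, P₀)` and `F` for the CDF of `G` under `P₀`. Since `T_n ⇒ P₀` and `F ∘ G` is
continuous, `F (G T_n)` converges in distribution to `F (G T)` with `T ∼ P₀`, which is uniform on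
`(0, 1]` by the probability integral transform; by Slutsky it remains to show that
`π̂_n - F (G T_n) → 0` in probability. Deterministically, `Q {D(·, Q) ≤ D(x, Q)} → F (G x)`
uniformly in `x` as `Q → P₀`: by (C4) it is squeezed between `Q {G ≤ G x ∓ 2τ}`, which converge
uniformly to `F (G x ∓ 2τ)` by Pólya's theorem, and `F` is uniformly continuous. Finally
`P̂_n → P₀` in probability, because the Lévy–Prokhorov metric metrizes weak convergence.
-/

open MeasureTheory ProbabilityTheory Filter Set Topology

theorem Continuous.uniformContinuous_of_tendsto_atBot_atTop {f : ℝ → ℝ} (hf : Continuous f)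
    {a b : ℝ} (ha : Tendsto f atBot (𝓝 a)) (hb : Tendsto f atTop (𝓝 b)) :
    UniformContinuous f := by
  set ramp : ℝ → ℝ := fun x => a + (b - a) * max 0 (min x 1)
  have hramp : UniformContinuous ramp := uniformContinuous_const.add
    (((LipschitzWith.id.min_const 1).const_max 0).uniformContinuous.const_mul' (b - a))
  have hbot : ∀ᶠ x in atBot, a = ramp x :=
    (eventually_le_atBot 0).mono fun x hx => by simp [ramp, min_le_of_left_le hx]
  have htop : ∀ᶠ x in atTop, b = ramp x :=
    (eventually_ge_atTop 1).mono fun x hx => by simp [ramp, min_eq_right hx]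
  have hvanish : Tendsto (fun x => f x - ramp x) (cocompact ℝ) (𝓝 0) := by
    rw [cocompact_eq_atBot_atTop, tendsto_sup]
    exact ⟨by simpa using ha.sub (tendsto_const_nhds.congr' hbot),
      by simpa using hb.sub (tendsto_const_nhds.congr' htop)⟩
  simpa using ((hf.sub hramp.continuous).uniformContinuous_of_tendsto_cocompact hvanish).add hramp

section Polya

variable {ι : Type*} {l : Filter ι} {Fs : ι → ℝ → ℝ} {F : ℝ → ℝ}

theorem eventually_forall_lt_add_of_tendsto_of_monotone (hFs : ∀ i, Monotone (Fs i))
    (hFs_le : ∀ i x, Fs i x ≤ 1) (hF : Monotone F) (hFc : Continuous F)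
    (hF_bot : Tendsto F atBot (𝓝 0)) (hF_top : Tendsto F atTop (𝓝 1))
    (hlim : ∀ x, Tendsto (fun i => Fs i x) l (𝓝 (F x))) {ε : ℝ} (hε : 0 < ε) :
    ∀ᶠ i in l, ∀ x, Fs i x < F x + ε := by
  obtain ⟨m, hm⟩ := exists_nat_gt (2 / ε)
  have hm0 : (0 : ℝ) < m := (by positivity : (0 : ℝ) < 2 / ε).trans hm
  have hmε : 1 / (m : ℝ) < ε / 2 := by
    rw [div_lt_iff₀ hm0]; rw [div_lt_iff₀ hε] at hm; linarith
  -- the levels `k / m` are attained, by the intermediate value theorem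
  have hlevel : ∀ k : ℕ, 0 < k → k < m → ∃ x, F x = k / m := fun k hk hkm =>
    mem_range_of_exists_le_of_exists_ge hFc
      (hF_bot.eventually (eventually_le_nhds (div_pos (Nat.cast_pos.2 hk) hm0))).exists
      (hF_top.eventually (eventually_ge_nhds ((div_lt_one hm0).2 (Nat.cast_lt.2 hkm)))).exists
  choose! x hx using hlevel
  filter_upwards [(Finset.range m).eventually_all.2 fun k _ =>
    (hlim (x k)).eventually (gt_mem_nhds (lt_add_of_pos_right (F (x k)) (half_pos hε)))]
    with i hi u
  have hFu : 0 ≤ F u := hF.le_of_tendsto hF_bot u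
  set k := ⌊m * F u⌋₊ + 1
  have hk_gt : m * F u < k := by push_cast [k]; exact Nat.lt_floor_add_one _
  have hk_le : (k : ℝ) ≤ m * F u + 1 := by
    push_cast [k]; linarith [Nat.floor_le (by positivity : 0 ≤ m * F u)]
  rcases lt_or_ge k m with hkm | hkm
  · have hFx : F (x k) = k / m := hx k (Nat.succ_pos _) hkm
    have hux : u ≤ x k := (hF.reflect_lt (by rw [hFx, lt_div_iff₀ hm0]; linarith)).le
    calc Fs i u ≤ Fs i (x k) := hFs i hux
      _ < k / m + ε / 2 := hFx ▸ hi k (Finset.mem_range.2 hkm)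
      _ ≤ (m * F u + 1) / m + ε / 2 := by gcongr
      _ = F u + 1 / m + ε / 2 := by field_simp
      _ < F u + ε := by linarith
  · have hmk : (m : ℝ) ≤ k := by exact_mod_cast hkm
    calc Fs i u ≤ 1 := hFs_le i u
      _ ≤ F u + 1 / m := by rw [← sub_le_iff_le_add', le_div_iff₀ hm0]; linarith
      _ < F u + ε := by linarith

theorem eventually_forall_sub_lt_of_tendsto_of_monotone (hFs : ∀ i, Monotone (Fs i))
    (hFs_nonneg : ∀ i x, 0 ≤ Fs i x) (hF : Monotone F) (hFc : Continuous F)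
    (hF_bot : Tendsto F atBot (𝓝 0)) (hF_top : Tendsto F atTop (𝓝 1))
    (hlim : ∀ x, Tendsto (fun i => Fs i x) l (𝓝 (F x))) {ε : ℝ} (hε : 0 < ε) :
    ∀ᶠ i in l, ∀ x, F x - ε < Fs i x := by
  -- apply the upper bound to the reflections `x ↦ 1 - Fs i (-x)`
  have h := eventually_forall_lt_add_of_tendsto_of_monotone (Fs := fun i x => 1 - Fs i (-x))
    (F := fun x => 1 - F (-x)) (fun i a b hab => sub_le_sub_left (hFs i (neg_le_neg hab)) 1)
    (fun i x => sub_le_self 1 (hFs_nonneg i (-x)))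
    (fun a b hab => sub_le_sub_left (hF (neg_le_neg hab)) 1) (by fun_prop)
    (by simpa using (tendsto_const_nhds (x := (1 : ℝ))).sub (hF_top.comp tendsto_neg_atBot_atTop))
    (by simpa using (tendsto_const_nhds (x := (1 : ℝ))).sub (hF_bot.comp tendsto_neg_atTop_atBot))
    (fun x => tendsto_const_nhds.sub (hlim (-x))) hε
  filter_upwards [h] with i hi x
  linarith [neg_neg x ▸ hi (-x)]

/-- **Pólya's theorem**. -/
theorem tendstoUniformly_of_tendsto_of_monotone (hFs : ∀ i, Monotone (Fs i))
    (hFs_nonneg : ∀ i x, 0 ≤ Fs i x) (hFs_le : ∀ i x, Fs i x ≤ 1) (hF : Monotone F)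
    (hFc : Continuous F) (hF_bot : Tendsto F atBot (𝓝 0)) (hF_top : Tendsto F atTop (𝓝 1))
    (hlim : ∀ x, Tendsto (fun i => Fs i x) l (𝓝 (F x))) :
    TendstoUniformly Fs F l := by
  refine Metric.tendstoUniformly_iff.2 fun ε hε => ?_
  filter_upwards [eventually_forall_lt_add_of_tendsto_of_monotone hFs hFs_le hF hFc hF_bot hF_top
      hlim hε, eventually_forall_sub_lt_of_tendsto_of_monotone hFs hFs_nonneg hF hFc hF_bot hF_top
      hlim hε] with i hupper hlower x
  rw [Real.dist_eq, abs_sub_lt_iff]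
  exact ⟨by linarith [hlower x], by linarith [hupper x]⟩

end Polya

theorem tendsto_cdf_of_tendsto {ι : Type*} {l : Filter ι} {ν : ι → ProbabilityMeasure ℝ}
    {ν₀ : ProbabilityMeasure ℝ} (h : Tendsto ν l (𝓝 ν₀)) {x : ℝ}
    (hx : ContinuousAt (cdf (ν₀ : Measure ℝ)) x) :
    Tendsto (fun i => cdf (ν i : Measure ℝ) x) l (𝓝 (cdf (ν₀ : Measure ℝ) x)) := by
  have hatom : (ν₀ : Measure ℝ) {x} = 0 := by
    conv_lhs => rw [← measure_cdf (ν₀ : Measure ℝ)]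
    rw [StieltjesFunction.measure_singleton, hx.continuousWithinAt.leftLim_eq, sub_self,
      ENNReal.ofReal_zero]
  have h' := ProbabilityMeasure.tendsto_measure_of_null_frontier_of_tendsto' h
    (E := Iic x) (by rwa [frontier_Iic])
  simp_rw [cdf_eq_real, measureReal_def]
  exact (ENNReal.tendsto_toReal (measure_ne_top _ _)).comp h'

theorem tendstoUniformly_cdf_of_tendsto {ι : Type*} {l : Filter ι} {ν : ι → ProbabilityMeasure ℝ}
    {ν₀ : ProbabilityMeasure ℝ} (h : Tendsto ν l (𝓝 ν₀)) (hc : Continuous (cdf (ν₀ : Measure ℝ))) :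
    TendstoUniformly (fun i => cdf (ν i : Measure ℝ)) (cdf (ν₀ : Measure ℝ)) l :=
  tendstoUniformly_of_tendsto_of_monotone (fun _ => monotone_cdf _) (fun _ => cdf_nonneg _)
    (fun _ => cdf_le_one _) (monotone_cdf _) hc (tendsto_cdf_atBot _) (tendsto_cdf_atTop _)
    fun _ => tendsto_cdf_of_tendsto h hc.continuousAt

section ProbabilityIntegralTransform

variable (ν : Measure ℝ) [IsProbabilityMeasure ν]

theorem measure_cdf_le_eq_ofReal (hc : Continuous (cdf ν)) {t : ℝ} (ht₀ : 0 ≤ t) (ht₁ : t < 1) :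
    ν {x | cdf ν x ≤ t} = ENNReal.ofReal t := by
  rcases eq_empty_or_nonempty {x | cdf ν x ≤ t} with hS | hS
  · obtain rfl : 0 = t := by
      refine ht₀.eq_or_lt.resolve_right fun ht => ?_
      obtain ⟨x, hx⟩ := ((tendsto_cdf_atBot ν).eventually (eventually_le_nhds ht)).exists
      exact hS.subset hx
    simp [hS]
  obtain ⟨b, hb⟩ := eventually_atTop.1 ((tendsto_cdf_atTop ν).eventually (eventually_gt_nhds ht₁))
  have hbdd : BddAbove {x | cdf ν x ≤ t} :=
    ⟨b, fun x hx => le_of_not_gt fun hbx => (hb x hbx.le).not_ge hx⟩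
  -- the sublevel set is a closed half-line `Iic a`, and continuity forces `cdf ν a = t`
  set a := sSup {x | cdf ν x ≤ t}
  have ha : cdf ν a ≤ t := (isClosed_le hc continuous_const).csSup_mem hS hbdd
  have hS_eq : {x | cdf ν x ≤ t} = Iic a :=
    Subset.antisymm (fun x hx => le_csSup hbdd hx) fun x hx => (monotone_cdf ν hx).trans ha
  have ha' : t ≤ cdf ν a := ge_of_tendsto (hc.continuousWithinAt (s := Ioi a)) <|
    eventually_nhdsWithin_of_forall fun y hy =>
      le_of_not_ge fun hyt => (not_le.2 hy) (le_csSup hbdd hyt)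
  rw [hS_eq, ← ofReal_cdf, le_antisymm ha ha']

/-- **Probability integral transform**. -/
theorem map_cdf_eq_restrict_Ioc (hc : Continuous (cdf ν)) :
    ν.map (cdf ν) = volume.restrict (Ioc 0 1) := by
  have := Measure.isProbabilityMeasure_map (μ := ν) hc.measurable.aemeasurable
  refine Measure.ext_of_Iic _ _ fun t => ?_
  rw [Measure.map_apply hc.measurable measurableSet_Iic, Measure.restrict_apply measurableSet_Iic]
  rcases lt_or_ge t 0 with ht₀ | ht₀
  · have h₁ : cdf ν ⁻¹' Iic t = ∅ :=
      eq_empty_of_forall_notMem fun x hx => (ht₀.trans_le (cdf_nonneg ν x)).not_ge hx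
    have h₂ : Iic t ∩ Ioc 0 1 = ∅ :=
      eq_empty_of_forall_notMem fun x hx => (ht₀.trans hx.2.1).not_ge hx.1
    simp [h₁, h₂]
  rcases lt_or_ge t 1 with ht₁ | ht₁
  · have h : Iic t ∩ Ioc 0 1 = Ioc 0 t := by
      ext x; simp only [mem_inter_iff, mem_Iic, mem_Ioc]
      constructor
      · rintro ⟨hxt, hx0, -⟩; exact ⟨hx0, hxt⟩
      · rintro ⟨hx0, hxt⟩; exact ⟨hxt, hx0, hxt.trans ht₁.le⟩
    rw [h, Real.volume_Ioc, sub_zero]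
    exact measure_cdf_le_eq_ofReal ν hc ht₀ ht₁
  · have h₁ : cdf ν ⁻¹' Iic t = univ := eq_univ_of_forall fun x => (cdf_le_one ν x).trans ht₁
    have h₂ : Iic t ∩ Ioc 0 1 = Ioc 0 1 := inter_eq_right.2 fun x hx => hx.2.trans ht₁
    simp [h₁, h₂]

end ProbabilityIntegralTransform

section DepthPValue

variable {X : Type*} [MeasurableSpace X]

/-- `F_Q(D(x; Q))`, where `F_Q` is the CDF of `D(T; Q)` for `T ∼ Q`;
so `π̂_n = depthPValue D P̂_n T_n`. -/
noncomputable def depthPValue (D : X → ProbabilityMeasure X → ℝ) (Q : ProbabilityMeasure X)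
    (x : X) : ℝ :=
  ((Q : Measure X) {y | D y Q ≤ D x Q}).toReal

theorem cdf_map_eq_toReal (μ : Measure X) [IsProbabilityMeasure μ] {G : X → ℝ}
    (hG : Measurable G) (u : ℝ) : cdf (μ.map G) u = (μ {x | G x ≤ u}).toReal := by
  have := Measure.isProbabilityMeasure_map (μ := μ) hG.aemeasurable
  rw [cdf_eq_real, map_measureReal_apply hG measurableSet_Iic, measureReal_def]
  rfl

variable {D : X → ProbabilityMeasure X → ℝ}

theorem depthPValue_self_eq (P : ProbabilityMeasure X) (hG : Measurable fun x => D x P) :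
    depthPValue D P = cdf ((P : Measure X).map fun x => D x P) ∘ fun x => D x P :=
  funext fun _ => (cdf_map_eq_toReal _ hG _).symm

theorem map_depthPValue_self (P : ProbabilityMeasure X) (hG : Measurable fun x => D x P)
    (hcdf : Continuous (cdf ((P : Measure X).map fun x => D x P))) :
    (P : Measure X).map (depthPValue D P) = volume.restrict (Ioc 0 1) := by
  have := Measure.isProbabilityMeasure_map (μ := (P : Measure X)) hG.aemeasurable
  rw [depthPValue_self_eq P hG, ← Measure.map_map hcdf.measurable hG,
    map_cdf_eq_restrict_Ioc _ hcdf]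

theorem depthPValue_mem_Icc_of_forall_abs_sub_le (Q : ProbabilityMeasure X) {G : X → ℝ}
    (hG : Measurable G) {τ : ℝ} (hτ : ∀ y, |D y Q - G y| ≤ τ) (x : X) :
    depthPValue D Q x ∈ Icc (cdf ((Q : Measure X).map G) (G x - 2 * τ))
      (cdf ((Q : Measure X).map G) (G x + 2 * τ)) := by
  rw [cdf_map_eq_toReal _ hG, cdf_map_eq_toReal _ hG]
  refine ⟨ENNReal.toReal_mono (measure_ne_top _ _) (measure_mono fun y hy => ?_),
    ENNReal.toReal_mono (measure_ne_top _ _) (measure_mono fun y hy => ?_)⟩ <;>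
  · simp only [mem_ofPred_eq] at hy ⊢
    linarith [abs_le.1 (hτ x), abs_le.1 (hτ y)]

theorem tendstoUniformly_depthPValue [TopologicalSpace X] [OpensMeasurableSpace X]
    {P : ProbabilityMeasure X} (hG : Continuous fun x => D x P)
    (hD : TendstoUniformly (fun Q x => D x Q) (fun x => D x P) (𝓝 P))
    (hcdf : Continuous (cdf ((P : Measure X).map fun x => D x P))) :
    TendstoUniformly (depthPValue D) (depthPValue D P) (𝓝 P) := by
  set G := fun x => D x P
  have hpolya : TendstoUniformly (fun Q : ProbabilityMeasure X => cdf ((Q : Measure X).map G))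
      (cdf ((P : Measure X).map G)) (𝓝 P) := by
    simpa only [ProbabilityMeasure.toMeasure_map, id] using tendstoUniformly_cdf_of_tendsto
      (ProbabilityMeasure.tendsto_map_of_tendsto_of_continuous _ _ tendsto_id hG)
      (by simpa only [ProbabilityMeasure.toMeasure_map] using hcdf)
  rw [Metric.tendstoUniformly_iff] at hpolya hD ⊢
  intro ε hε
  obtain ⟨δ, hδ, hcdfδ⟩ := Metric.uniformContinuous_iff.1
    (hcdf.uniformContinuous_of_tendsto_atBot_atTop (tendsto_cdf_atBot _) (tendsto_cdf_atTop _))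
    _ (half_pos hε)
  filter_upwards [hpolya _ (half_pos hε), hD (δ / 3) (by positivity)] with Q hQcdf hQD x
  have hτ : ∀ y, |D y Q - G y| ≤ δ / 3 := fun y => by
    rw [abs_sub_comm, ← Real.dist_eq]; exact (hQD y).le
  obtain ⟨hlower, hupper⟩ := depthPValue_mem_Icc_of_forall_abs_sub_le Q hG.measurable hτ x
  have h₁ := hQcdf (G x - 2 * (δ / 3))
  have h₂ := hQcdf (G x + 2 * (δ / 3))
  have h₃ := hcdfδ (a := G x - 2 * (δ / 3)) (b := G x)
    (by rw [Real.dist_eq, abs_lt]; constructor <;> linarith)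
  have h₄ := hcdfδ (a := G x + 2 * (δ / 3)) (b := G x)
    (by rw [Real.dist_eq, abs_lt]; constructor <;> linarith)
  rw [depthPValue_self_eq P hG.measurable, Function.comp_apply]
  rw [Real.dist_eq, abs_lt] at h₁ h₂ h₃ h₄ ⊢
  constructor <;> linarith [h₁.1, h₁.2, h₂.1, h₂.2, h₃.1, h₃.2, h₄.1, h₄.2]

end DepthPValue

section ConvergenceInProbability

variable {ι Ω : Type*} {l : Filter ι} [MeasurableSpace Ω] {μ : Measure Ω}

theorem tendsto_measure_notMem_of_tendsto_dist {M : Type*} [PseudoMetricSpace M]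
    {Y : ι → Ω → M} {y : ι → M} {y₀ : M} (hy : Tendsto y l (𝓝 y₀))
    (hY : ∀ ε > 0, Tendsto (fun i => μ {ω | ε ≤ dist (Y i ω) (y i)}) l (𝓝 0))
    {U : Set M} (hU : U ∈ 𝓝 y₀) :
    Tendsto (fun i => μ {ω | Y i ω ∉ U}) l (𝓝 0) := by
  obtain ⟨η, hη, hball⟩ := Metric.mem_nhds_iff.1 hU
  refine tendsto_of_tendsto_of_tendsto_of_le_of_le' tendsto_const_nhds (hY _ (half_pos hη))
    (Eventually.of_forall fun _ => zero_le) ?_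
  filter_upwards [Metric.tendsto_nhds.1 hy _ (half_pos hη)] with i hi
  refine measure_mono fun ω (hω : Y i ω ∉ U) =>
    show η / 2 ≤ _ from le_of_not_gt fun hclose => hω (hball ?_)
  calc dist (Y i ω) y₀ ≤ dist (Y i ω) (y i) + dist (y i) y₀ := dist_triangle _ _ _
    _ < η / 2 + η / 2 := add_lt_add hclose hi
    _ = η := add_halves η

theorem ProbabilityMeasure.tendsto_measure_notMem_of_tendsto_levyProkhorovDist {H : Type*}
    [PseudoMetricSpace H] [TopologicalSpace.SeparableSpace H] [MeasurableSpace H]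
    [OpensMeasurableSpace H] {P : ι → ProbabilityMeasure H} {P₀ : ProbabilityMeasure H}
    (hP : Tendsto P l (𝓝 P₀)) {Q : ι → Ω → ProbabilityMeasure H}
    (hQ : ∀ ε > 0, Tendsto (fun i => μ {ω | ε ≤ levyProkhorovDist
      (Q i ω : Measure H) (P i : Measure H)}) l (𝓝 0))
    {U : Set (ProbabilityMeasure H)} (hU : U ∈ 𝓝 P₀) :
    Tendsto (fun i => μ {ω | Q i ω ∉ U}) l (𝓝 0) :=
  let e := LevyProkhorov.probabilityMeasureHomeomorph (Ω := H)
  tendsto_measure_notMem_of_tendsto_dist (Y := fun i ω => e (Q i ω))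
    ((e.continuous.tendsto P₀).comp hP) hQ (e.symm.continuous.continuousAt.preimage_mem_nhds hU)

theorem tendstoInMeasure_sub_of_tendstoUniformly {M α : Type*} [TopologicalSpace M]
    {Φ : M → α → ℝ} {m₀ : M} (hΦ : TendstoUniformly Φ (Φ m₀) (𝓝 m₀)) {Y : ι → Ω → M}
    (hY : ∀ U ∈ 𝓝 m₀, Tendsto (fun i => μ {ω | Y i ω ∉ U}) l (𝓝 0)) (T : ι → Ω → α) :
    TendstoInMeasure μ (fun i ω => Φ (Y i ω) (T i ω) - Φ m₀ (T i ω)) l 0 := by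
  refine tendstoInMeasure_iff_norm.2 fun ε hε => ?_
  refine tendsto_of_tendsto_of_tendsto_of_le_of_le tendsto_const_nhds
    (hY _ (Metric.tendstoUniformly_iff.1 hΦ ε hε)) (fun _ => zero_le) fun i =>
      measure_mono fun ω hω hclose => ?_
  have hsmall := hclose (T i ω)
  rw [dist_comm, dist_eq_norm] at hsmall
  simp only [mem_ofPred_eq, Pi.zero_apply, sub_zero] at hω
  exact hω.not_gt hsmall

theorem tendstoInDistribution_of_map_eq {E : Type*} [TopologicalSpace E] [MeasurableSpace E]
    [OpensMeasurableSpace E] [IsProbabilityMeasure μ] {T : ι → Ω → E}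
    {P : ι → ProbabilityMeasure E} {P₀ : ProbabilityMeasure E} (hT : ∀ i, Measurable (T i))
    (hlaw : ∀ i, μ.map (T i) = P i) (hP : Tendsto P l (𝓝 P₀)) :
    TendstoInDistribution T l id (fun _ => μ) (P₀ : Measure E) where
  forall_aemeasurable i := (hT i).aemeasurable
  aemeasurable_limit := aemeasurable_id
  tendsto := by
    simp only [hlaw, Measure.map_id]
    exact hP

end ConvergenceInProbability

theorem depth_pvalue_asymptotically_uniform_general
    {H : Type*} [NormedAddCommGroup H]
    [TopologicalSpace.SeparableSpace H] [MeasurableSpace H] [BorelSpace H]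
    {Ω : Type*} [MeasurableSpace Ω] (μ : Measure Ω) [IsProbabilityMeasure μ]
    (D : H → ProbabilityMeasure H → ℝ)
    -- (C1): the sampling distributions converge weakly to a limit `P₀`
    (P : ℕ → ProbabilityMeasure H) (P₀ : ProbabilityMeasure H)
    (hP : Filter.Tendsto P Filter.atTop (nhds P₀))
    -- (C2): the random resampling distributions are consistent in probability
    (Phat : ℕ → Ω → ProbabilityMeasure H)
    (hPhat : ∀ ε > 0, Filter.Tendsto
      (fun n => (μ {ω | ε ≤ levyProkhorovDist
        ((Phat n ω : Measure H)) ((P n : Measure H))}).toReal)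
      Filter.atTop (nhds 0))
    -- (C3): uniform continuity of the depth in the point
    (hDpoint : ∀ (x : ℕ → H) (x₀ : H), Filter.Tendsto x Filter.atTop (nhds x₀) →
      ∀ ε > 0, ∃ N : ℕ, ∀ n ≥ N, ∀ Q : ProbabilityMeasure H,
        |D (x n) Q - D x₀ Q| < ε)
    -- (C4): uniform continuity of the depth in the probability measure
    (hDmeas : ∀ (Q : ℕ → ProbabilityMeasure H) (Q₀ : ProbabilityMeasure H),
      Filter.Tendsto Q Filter.atTop (nhds Q₀) →
      ∀ ε > 0, ∃ N : ℕ, ∀ n ≥ N, ∀ x : H, |D x (Q n) - D x Q₀| < ε)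
    -- (C5): the CDF of `D(T;P₀)` for `T ∼ P₀` is continuous
    (hlimCDF : Continuous fun u : ℝ => ((P₀ : Measure H) {x | D x P₀ ≤ u}).toReal)
    -- the bootstrap CDFs of the depth statistic
    (Fhat : ℕ → Ω → ℝ → ℝ)
    (hFhat : ∀ n ω u, Fhat n ω u
      = ((Phat n ω : Measure H) {x | D x (Phat n ω) ≤ u}).toReal)
    -- the test statistics `T_n ∼ P_n`
    (T : ℕ → Ω → H) (hTmeas : ∀ n, Measurable (T n))
    (hTlaw : ∀ n, μ.map (T n) = (P n : Measure H))
    -- the bootstrap depth p-values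
    (pihat : ℕ → Ω → ℝ)
    (hpihat : ∀ n ω, pihat n ω = Fhat n ω (D (T n ω) (Phat n ω)))
    (hpimeas : ∀ n, Measurable (pihat n)) :
    ∀ f : BoundedContinuousFunction ℝ ℝ,
      Filter.Tendsto (fun n => ∫ ω, f (pihat n ω) ∂μ) Filter.atTop
        (nhds (∫ x in Set.Ioc (0:ℝ) 1, f x)) := by
  intro f
  obtain rfl : pihat = fun n ω => depthPValue D (Phat n ω) (T n ω) :=
    funext₂ fun n ω => by rw [hpihat, hFhat]; rfl
  have hG : Continuous fun x => D x P₀ :=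
    continuous_iff_seqContinuous.2 fun x x₀ hx => Metric.tendsto_atTop.2 fun ε hε =>
      (hDpoint x x₀ hx ε hε).imp fun N hN n hn => by simpa [Real.dist_eq] using hN n hn P₀
  have hD : TendstoUniformly (fun Q x => D x Q) (fun x => D x P₀) (𝓝 P₀) :=
    tendstoUniformly_iff_seq_tendstoUniformly.2 fun Q hQ => Metric.tendstoUniformly_iff.2
      fun ε hε => eventually_atTop.2 <| (hDmeas Q P₀ hQ ε hε).imp fun N hN n hn x => by
        rw [dist_comm, Real.dist_eq]; exact hN n hn x
  have hcdf : Continuous (cdf ((P₀ : Measure H).map fun x => D x P₀)) := by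
    convert hlimCDF using 1
    exact funext (cdf_map_eq_toReal _ hG.measurable)
  have hPhat_nhds : ∀ U ∈ 𝓝 P₀, Tendsto (fun n => μ {ω | Phat n ω ∉ U}) atTop (𝓝 0) :=
    fun U => ProbabilityMeasure.tendsto_measure_notMem_of_tendsto_levyProkhorovDist hP
      (fun ε hε => (ENNReal.tendsto_toReal_iff (fun _ => measure_ne_top _ _)
        ENNReal.zero_ne_top).1 (by simpa using hPhat ε hε))
  have horacle := (tendstoInDistribution_of_map_eq hTmeas hTlaw hP).continuous_comp
    ((depthPValue_self_eq P₀ hG.measurable) ▸ hcdf.comp hG)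
  have hpvalue := tendstoInDistribution_of_tendstoInMeasure_sub _ _ horacle
    (tendstoInMeasure_sub_of_tendstoUniformly (tendstoUniformly_depthPValue hG hD hcdf)
      hPhat_nhds T) fun n => (hpimeas n).aemeasurable
  have hintegral := ProbabilityMeasure.tendsto_iff_forall_integral_tendsto.1 hpvalue.tendsto f
  simp only [ProbabilityMeasure.coe_mk, Function.comp_id,
    map_depthPValue_self P₀ hG.measurable hcdf] at hintegral
  exact hintegral.congr fun n =>
    integral_map (hpimeas n).aemeasurable f.continuous.aestronglyMeasurable

/-- Validity of the resampling depth p-value: under conditions (C1)–(C5), the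
bootstrap depth p-value `π̂_n = F̂_n(D(T_n; P̂_n))` converges in distribution to
the standard uniform distribution on `(0,1)`. -/
theorem depth_pvalue_asymptotically_uniform
    {H : Type*} [NormedAddCommGroup H] [InnerProductSpace ℝ H] [CompleteSpace H]
    [TopologicalSpace.SeparableSpace H] [MeasurableSpace H] [BorelSpace H]
    {Ω : Type*} [MeasurableSpace Ω] (μ : Measure Ω) [IsProbabilityMeasure μ]
    (D : H → ProbabilityMeasure H → ℝ)
    -- (C1): the sampling distributions converge weakly to a limit `P₀`
    (P : ℕ → ProbabilityMeasure H) (P₀ : ProbabilityMeasure H)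
    (hP : Filter.Tendsto P Filter.atTop (nhds P₀))
    -- (C2): the random resampling distributions are consistent in probability
    (Phat : ℕ → Ω → ProbabilityMeasure H)
    (hPhat : ∀ ε > 0, Filter.Tendsto
      (fun n => (μ {ω | ε ≤ levyProkhorovDist
        ((Phat n ω : Measure H)) ((P n : Measure H))}).toReal)
      Filter.atTop (nhds 0))
    -- (C3): uniform continuity of the depth in the point
    (hDpoint : ∀ (x : ℕ → H) (x₀ : H), Filter.Tendsto x Filter.atTop (nhds x₀) →
      ∀ ε > 0, ∃ N : ℕ, ∀ n ≥ N, ∀ Q : ProbabilityMeasure H,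
        |D (x n) Q - D x₀ Q| < ε)
    -- (C4): uniform continuity of the depth in the probability measure
    (hDmeas : ∀ (Q : ℕ → ProbabilityMeasure H) (Q₀ : ProbabilityMeasure H),
      Filter.Tendsto Q Filter.atTop (nhds Q₀) →
      ∀ ε > 0, ∃ N : ℕ, ∀ n ≥ N, ∀ x : H, |D x (Q n) - D x Q₀| < ε)
    -- (C5): the CDF of `D(T;P₀)` for `T ∼ P₀` is continuous
    (hlimCDF : Continuous fun u : ℝ => ((P₀ : Measure H) {x | D x P₀ ≤ u}).toReal)
    -- the bootstrap CDFs of the depth statistic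
    (Fhat : ℕ → Ω → ℝ → ℝ)
    (hFhat : ∀ n ω u, Fhat n ω u
      = ((Phat n ω : Measure H) {x | D x (Phat n ω) ≤ u}).toReal)
    -- the test statistics `T_n ∼ P_n`
    (T : ℕ → Ω → H) (hTmeas : ∀ n, Measurable (T n))
    (hTlaw : ∀ n, μ.map (T n) = (P n : Measure H))
    -- the bootstrap depth p-values
    (pihat : ℕ → Ω → ℝ)
    (hpihat : ∀ n ω, pihat n ω = Fhat n ω (D (T n ω) (Phat n ω)))
    (hpimeas : ∀ n, Measurable (pihat n)) :
    ∀ f : BoundedContinuousFunction ℝ ℝ,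
      Filter.Tendsto (fun n => ∫ ω, f (pihat n ω) ∂μ) Filter.atTop
        (nhds (∫ x in Set.Ioc (0:ℝ) 1, f x)) :=
  depth_pvalue_asymptotically_uniform_general μ D P P₀ hP Phat hPhat hDpoint hDmeas hlimCDF Fhat
    hFhat T hTmeas hTlaw pihat hpihat hpimeas
end

section
/- If a sequence of real random variables X_n converges in distribution to X whose cumulative distribution function F is continuous, then the cumulative distribution functions F_n of X_n converge to F uniformly on ℝ: sup_{u∈ℝ} |F_n(u) − F(u)| → 0 (Pólya's theorem). -/
/-!
For monotone `f`, `g` and `a ≤ u ≤ b`, the error `|f u - g u|` is at most the errors at `a` and `b`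
plus `g b - g a`. Around each point, continuity of `G` provides such `a < b` with `G b - G a`
small, which gives locally uniform convergence and hence uniform convergence on compact intervals.
On the tails `(-∞, a]` and `[b, ∞)` the common bounds `0 ≤ F n, G ≤ 1` replace the missing endpoint.
-/

open Filter Topology Set MeasureTheory ProbabilityTheory

theorem abs_sub_lt_of_mem_Icc_of_mem_Icc {x y a b a' b' ε : ℝ} (hx : x ∈ Icc a b)
    (hy : y ∈ Icc a' b') (ha : |a - a'| < ε) (hb : |b - b'| < ε) (hab' : b' - a' < ε) :
    |x - y| < 2 * ε := by
  rw [abs_sub_lt_iff] at ha hb ⊢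
  constructor <;> linarith [hx.1, hx.2, hy.1, hy.2]

section Monotone

variable {ι : Type*} {l : Filter ι} {F : ι → ℝ → ℝ} {G : ℝ → ℝ}

theorem tendstoLocallyUniformly_of_monotone_of_continuous (hF : ∀ i, Monotone (F i))
    (hG : Monotone G) (hGc : Continuous G) (h : ∀ x, Tendsto (F · x) l (𝓝 (G x))) :
    TendstoLocallyUniformly F G l := by
  rw [Metric.tendstoLocallyUniformly_iff]
  intro ε hε x
  have hgap : Tendsto (fun t => G (x + t) - G (x - t)) (𝓝[>] 0) (𝓝 0) := by
    have hcont : Continuous fun t => G (x + t) - G (x - t) := by fun_prop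
    simpa using (hcont.tendsto 0).mono_left nhdsWithin_le_nhds
  obtain ⟨t, hgap_t, ht⟩ :=
    ((hgap.eventually (gt_mem_nhds (half_pos hε))).and self_mem_nhdsWithin).exists
  refine ⟨Icc (x - t) (x + t), Icc_mem_nhds (sub_lt_self x ht) (lt_add_of_pos_right x ht), ?_⟩
  filter_upwards [(h (x - t)).eventually (eventually_abs_sub_lt _ (half_pos hε)),
    (h (x + t)).eventually (eventually_abs_sub_lt _ (half_pos hε))] with i hlo hhi y hy
  rw [dist_comm, Real.dist_eq]
  linarith [abs_sub_lt_of_mem_Icc_of_mem_Icc ⟨hF i hy.1, hF i hy.2⟩ ⟨hG hy.1, hG hy.2⟩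
    hlo hhi hgap_t]

theorem exists_eventually_forall_le_abs_sub_lt (hF : ∀ i, Monotone (F i)) (hG : Monotone G)
    {m : ℝ} (hFm : ∀ i x, m ≤ F i x) (hGbot : Tendsto G atBot (𝓝 m))
    (h : ∀ x, Tendsto (F · x) l (𝓝 (G x))) {ε : ℝ} (hε : 0 < ε) :
    ∃ a, ∀ᶠ i in l, ∀ u ≤ a, |F i u - G u| < ε := by
  obtain ⟨a, ha⟩ := (hGbot.eventually (gt_mem_nhds (lt_add_of_pos_right m (half_pos hε)))).exists
  refine ⟨a, ?_⟩
  filter_upwards [(h a).eventually (eventually_abs_sub_lt _ (half_pos hε))] with i hi u hu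
  linarith [abs_sub_lt_of_mem_Icc_of_mem_Icc ⟨hFm i u, hF i hu⟩
    ⟨hG.le_of_tendsto hGbot u, hG hu⟩ (by simpa using half_pos hε) hi (by linarith)]

theorem exists_eventually_forall_ge_abs_sub_lt (hF : ∀ i, Monotone (F i)) (hG : Monotone G)
    {M : ℝ} (hFM : ∀ i x, F i x ≤ M) (hGtop : Tendsto G atTop (𝓝 M))
    (h : ∀ x, Tendsto (F · x) l (𝓝 (G x))) {ε : ℝ} (hε : 0 < ε) :
    ∃ b, ∀ᶠ i in l, ∀ u ≥ b, |F i u - G u| < ε := by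
  obtain ⟨b, hb⟩ := (hGtop.eventually (lt_mem_nhds (sub_lt_self M (half_pos hε)))).exists
  refine ⟨b, ?_⟩
  filter_upwards [(h b).eventually (eventually_abs_sub_lt _ (half_pos hε))] with i hi u hu
  linarith [abs_sub_lt_of_mem_Icc_of_mem_Icc ⟨hF i hu, hFM i u⟩
    ⟨hG hu, hG.ge_of_tendsto hGtop u⟩ hi (by simpa using half_pos hε) (by linarith)]

theorem tendstoUniformly_of_monotone_of_continuous (hF : ∀ i, Monotone (F i)) (hG : Monotone G)
    (hGc : Continuous G) {m M : ℝ} (hFm : ∀ i x, m ≤ F i x) (hFM : ∀ i x, F i x ≤ M)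
    (hGbot : Tendsto G atBot (𝓝 m)) (hGtop : Tendsto G atTop (𝓝 M))
    (h : ∀ x, Tendsto (F · x) l (𝓝 (G x))) :
    TendstoUniformly F G l := by
  rw [Metric.tendstoUniformly_iff]
  intro ε hε
  obtain ⟨a, hleft⟩ := exists_eventually_forall_le_abs_sub_lt hF hG hFm hGbot h hε
  obtain ⟨b, hright⟩ := exists_eventually_forall_ge_abs_sub_lt hF hG hFM hGtop h hε
  have hmiddle := tendstoLocallyUniformly_iff_forall_isCompact.1
    (tendstoLocallyUniformly_of_monotone_of_continuous hF hG hGc h) (Icc a b) isCompact_Icc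
  filter_upwards [hleft, hright, Metric.tendstoUniformlyOn_iff.1 hmiddle ε hε]
    with i hleft_i hright_i hmiddle_i u
  rcases le_or_gt u a with hua | hau
  · rw [dist_comm, Real.dist_eq]; exact hleft_i u hua
  rcases le_or_gt b u with hbu | hub
  · rw [dist_comm, Real.dist_eq]; exact hright_i u hbu
  exact hmiddle_i u ⟨hau.le, hub.le⟩

end Monotone

/-- Pólya's theorem: convergence in distribution to a law with continuous CDF
implies uniform convergence of CDFs. -/
theorem polya_uniform_cdf_convergence
    (μ : ℕ → ProbabilityMeasure ℝ) (ν : ProbabilityMeasure ℝ)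
    (F : ℕ → ℝ → ℝ) (G : ℝ → ℝ)
    (hF : ∀ n u, F n u = ((μ n : Measure ℝ) (Set.Iic u)).toReal)
    (hG : ∀ u, G u = ((ν : Measure ℝ) (Set.Iic u)).toReal)
    (hconv : ∀ u, Filter.Tendsto (fun n => F n u) Filter.atTop (nhds (G u)))
    (hGcont : Continuous G) :
    ∀ ε > 0, ∃ N : ℕ, ∀ n ≥ N, ∀ u : ℝ, |F n u - G u| < ε := by
  obtain rfl : F = fun n => ⇑(cdf (μ n : Measure ℝ)) := by
    ext n u; rw [hF, cdf_eq_real, measureReal_def]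
  obtain rfl : G = ⇑(cdf (ν : Measure ℝ)) := by
    ext u; rw [hG, cdf_eq_real, measureReal_def]
  have hunif := tendstoUniformly_of_monotone_of_continuous (fun n => monotone_cdf _)
    (monotone_cdf _) hGcont (fun n => cdf_nonneg _) (fun n => cdf_le_one _)
    (tendsto_cdf_atBot _) (tendsto_cdf_atTop _) hconv
  intro ε hε
  obtain ⟨N, hN⟩ := eventually_atTop.1 (Metric.tendstoUniformly_iff.1 hunif ε hε)
  exact ⟨N, fun n hn u => by simpa [Real.dist_eq, abs_sub_comm] using hN n hn u⟩
end

section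
/- Let P be a Gaussian measure on a separable Hilbert space H with mean 0 and trace-class covariance operator Σ with eigenvalue–eigenfunction pairs (σ_j, ψ_j). For the Gaussian kernel depth D_K(x;P) = E[exp(−‖x−X‖²/2)] with X ∼ P, one has D_K(x;P) = (Π_{j=1}^∞ (1+σ_j))^{−1/2} · exp(−(1/2) Σ_{j=1}^∞ ⟨x,ψ_j⟩²/(1+σ_j)) for all x ∈ H. -/
/-!
Expanding `x - y` in the Hilbert basis, Parseval turns the kernel `exp (-‖x - y‖² / 2)` into the
infinite product of the one-dimensional kernels `exp (-(⟪ψ j, x⟫ - ⟪ψ j, y⟫)² / 2)`. The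
coordinates `⟪ψ j, ·⟫` are independent under `P`, so the expectation of each finite partial
product is the product of one-dimensional Gaussian integrals, computed by completing the square:
`(1 + σ_j)^(-1/2) exp (-⟪x, ψ j⟫² / (2 (1 + σ_j)))`. Dominated convergence (the kernels are
bounded by `1`) passes to the limit on the left, and `∑ σ_j < ∞` makes the product of the
factors converge on the right.
-/
open MeasureTheory ProbabilityTheory Real Filter Topology

lemma integral_exp_neg_sq_sub_div_two_gaussianReal (a m : ℝ) (v : NNReal) :
    ∫ t, exp (-(a - t) ^ 2 / 2) ∂gaussianReal m v
      = (1 + (v : ℝ)) ^ (-(1 : ℝ) / 2) * exp (-(1 / 2) * ((a - m) ^ 2 / (1 + v))) := by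
  rcases eq_or_ne v 0 with rfl | hv
  · simp [gaussianReal_zero_var, integral_dirac]
    ring_nf
  have hv' : (0 : ℝ) < v := by positivity
  rw [gaussianReal_of_var_ne_zero m hv, integral_withDensity_eq_integral_toReal_smul
    (measurable_gaussianPDF m v) (ae_of_all _ fun _ => gaussianPDF_lt_top)]
  have hsq : ∀ t, (gaussianPDF m v t).toReal • exp (-(a - t) ^ 2 / 2)
      = (√(2 * π * v))⁻¹ * exp (-(1 / 2) * ((a - m) ^ 2 / (1 + v)))
        * exp (-((1 + v) / (2 * v)) * (t - (a * v + m) / (1 + v)) ^ 2) := by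
    intro t
    rw [toReal_gaussianPDF, gaussianPDFReal, smul_eq_mul, mul_assoc, ← exp_add,
      mul_assoc _ (rexp _), ← exp_add]
    congr 2
    field_simp
    ring
  simp_rw [hsq]
  rw [integral_const_mul, integral_sub_right_eq_self
    (fun u => exp (-((1 + v) / (2 * v)) * u ^ 2)), integral_gaussian,
    show π / ((1 + v) / (2 * v)) = 2 * π * v / (1 + v) by field_simp,
    sqrt_div' _ (by positivity), neg_div, rpow_neg (by positivity), ← sqrt_eq_rpow]
  field_simp

namespace ProbabilityTheory

variable {Ω β : Type*} [MeasurableSpace Ω] [MeasurableSpace β] {μ : Measure Ω}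

lemma iIndepFun.integral_finset_prod_comp {ι : Type*} {X : ι → Ω → β} {f : ι → β → ℝ}
    (hX : iIndepFun X μ) (mX : ∀ i, Measurable (X i)) (hf : ∀ i, Measurable (f i))
    (s : Finset ι) :
    ∫ ω, ∏ i ∈ s, f i (X i ω) ∂μ = ∏ i ∈ s, ∫ ω, f i (X i ω) ∂μ := by
  have := (hX.precomp Subtype.val_injective (g := ((↑) : s → ι))).integral_fun_prod_comp
    (f := fun i : s => f i) (fun i => (mX i).aemeasurable)
    (fun i => (hf i).aestronglyMeasurable)
  rw [← Finset.prod_coe_sort s]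
  simp_rw [← Finset.prod_coe_sort s (fun i => f i (X i _))]
  exact this

lemma iIndepFun.tendsto_prod_range_integral_of_hasProd {X : ℕ → Ω → β} {f : ℕ → β → ℝ}
    (hX : iIndepFun X μ) (mX : ∀ i, Measurable (X i)) (hf : ∀ i, Measurable (f i))
    (hf_le : ∀ i b, ‖f i b‖ ≤ 1) {g : Ω → ℝ} (hg : ∀ ω, HasProd (fun i => f i (X i ω)) (g ω)) :
    Tendsto (fun n => ∏ i ∈ Finset.range n, ∫ ω, f i (X i ω) ∂μ) atTop (𝓝 (∫ ω, g ω ∂μ)) := by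
  have := hX.isProbabilityMeasure
  simp_rw [← hX.integral_finset_prod_comp mX hf]
  have hmeas n : Measurable fun ω => ∏ i ∈ Finset.range n, f i (X i ω) :=
    Finset.measurable_fun_prod _ fun i _ => (hf i).comp (mX i)
  have hbound n ω : ‖∏ i ∈ Finset.range n, f i (X i ω)‖ ≤ 1 := by
    rw [norm_prod]
    exact Finset.prod_le_one (fun _ _ => norm_nonneg _) fun i _ => hf_le i _
  exact tendsto_integral_of_dominated_convergence (fun _ => 1)
    (fun n => (hmeas n).aestronglyMeasurable) (integrable_const 1)
    (fun n => ae_of_all _ (hbound n)) (ae_of_all _ fun ω => (hg ω).tendsto_prod_nat)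

end ProbabilityTheory

lemma HilbertBasis.hasSum_sq_inner {H ι : Type*} [NormedAddCommGroup H]
    [InnerProductSpace ℝ H] (b : HilbertBasis ι ℝ H) (x : H) :
    HasSum (fun i => inner ℝ (b i) x ^ 2) (‖x‖ ^ 2) := by
  simpa [← real_inner_self_eq_norm_sq, sq, real_inner_comm x] using b.hasSum_inner_mul_inner x x

lemma HasProd.rpow_const {ι : Type*} {f : ι → ℝ} {a : ℝ} (hf : HasProd f a)
    (hf0 : ∀ i, 0 ≤ f i) (ha : a ≠ 0) (p : ℝ) : HasProd (fun i => f i ^ p) (a ^ p) := by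
  have := Filter.Tendsto.rpow_const hf (p := p) (Or.inl ha)
  simpa only [HasProd, Function.comp_def, ← Real.finsetProd_rpow _ _ fun i _ => hf0 i] using this

lemma NNReal.hasProd_one_add_rpow {ι : Type*} {σ : ι → NNReal} (hσ : Summable σ) (p : ℝ) :
    HasProd (fun i => (1 + (σ i : ℝ)) ^ p) ((∏' i, (1 + (σ i : ℝ))) ^ p) := by
  have hlog := Real.summable_log_one_add_of_summable (NNReal.summable_coe.mpr hσ)
  have hprod := Real.hasProd_of_hasSum_log (fun i => by positivity) hlog.hasSum
  exact hprod.multipliable.hasProd.rpow_const (fun i => by positivity)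
    (hprod.tprod_eq ▸ (exp_pos _).ne') p

lemma HilbertBasis.hasProd_exp_neg_sq_inner_sub {H ι : Type*} [NormedAddCommGroup H]
    [InnerProductSpace ℝ H] (b : HilbertBasis ι ℝ H) (x y : H) :
    HasProd (fun i => exp (-(inner ℝ (b i) x - inner ℝ (b i) y) ^ 2 / 2))
      (exp (-‖x - y‖ ^ 2 / 2)) := by
  have := ((b.hasSum_sq_inner (x - y)).neg.div_const 2).rexp
  simpa only [inner_sub_right, Function.comp_def] using this

theorem gaussian_kernel_depth_closed_form_general
    {H : Type*} [NormedAddCommGroup H] [InnerProductSpace ℝ H]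
    [MeasurableSpace H] [BorelSpace H]
    (P : Measure H)
    (ψ : HilbertBasis ℕ ℝ H)
    (σ : ℕ → NNReal) (hσsum : Summable σ)
    (hindep : iIndepFun
      (fun j : ℕ => fun y : H => (inner ℝ (ψ j) y : ℝ)) P)
    (hlaw : ∀ j : ℕ, P.map (fun y : H => (inner ℝ (ψ j) y : ℝ)) = gaussianReal 0 (σ j)) :
    ∀ x : H,
      ∫ y, Real.exp (-‖x - y‖ ^ 2 / 2) ∂P
        = (∏' j : ℕ, (1 + (σ j : ℝ))) ^ (-(1:ℝ) / 2)
          * Real.exp (-(1 / 2) * ∑' j : ℕ, (inner ℝ x (ψ j) : ℝ) ^ 2 / (1 + (σ j : ℝ))) := by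
  intro x
  simp_rw [real_inner_comm _ x]
  have hcoord : ∀ j, Measurable fun y : H => inner ℝ (ψ j) y := fun j =>
    (innerSL ℝ (ψ j)).continuous.measurable
  have hfactor : ∀ j, ∫ y, exp (-(inner ℝ (ψ j) x - inner ℝ (ψ j) y) ^ 2 / 2) ∂P
      = (1 + (σ j : ℝ)) ^ (-(1 : ℝ) / 2)
        * exp (-(1 / 2) * (inner ℝ (ψ j) x ^ 2 / (1 + σ j))) := by
    intro j
    have h := integral_exp_neg_sq_sub_div_two_gaussianReal (inner ℝ (ψ j) x) 0 (σ j)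
    rwa [sub_zero, ← hlaw j, integral_map (hcoord j).aemeasurable (by fun_prop)] at h
  have hlim := hindep.tendsto_prod_range_integral_of_hasProd hcoord
    (f := fun j t => exp (-(inner ℝ (ψ j) x - t) ^ 2 / 2)) (fun j => by fun_prop)
    (fun j t => by
      rw [norm_of_nonneg (exp_pos _).le, exp_le_one_iff]
      nlinarith [sq_nonneg (inner ℝ (ψ j) x - t)])
    (ψ.hasProd_exp_neg_sq_inner_sub x)
  have hsum : Summable fun j => inner ℝ (ψ j) x ^ 2 / (1 + (σ j : ℝ)) :=
    (ψ.hasSum_sq_inner x).summable.of_nonneg_of_le (fun j => by positivity)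
      fun j => div_le_self (sq_nonneg _) (by simp)
  have hprod := (NNReal.hasProd_one_add_rpow hσsum (-(1 : ℝ) / 2)).mul
    (hsum.hasSum.mul_left (-(1 / 2))).rexp
  simp_rw [hfactor] at hlim
  exact tendsto_nhds_unique hlim hprod.tendsto_prod_nat

/-- Closed form of the Gaussian kernel depth under a centered Gaussian measure on a
separable Hilbert space: if the coordinates `⟨·,ψ_j⟩` are independent `N(0,σ_j)`
under `P` for a Hilbert basis `ψ`, then
`D_K(x;P) = (∏_j (1+σ_j))^{-1/2} exp(−(1/2)∑_j ⟨x,ψ_j⟩²/(1+σ_j))`. -/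
theorem gaussian_kernel_depth_closed_form
    {H : Type*} [NormedAddCommGroup H] [InnerProductSpace ℝ H] [CompleteSpace H]
    [TopologicalSpace.SeparableSpace H] [MeasurableSpace H] [BorelSpace H]
    (P : Measure H) [IsProbabilityMeasure P]
    (ψ : HilbertBasis ℕ ℝ H)
    (σ : ℕ → NNReal) (hσsum : Summable σ)
    (hindep : iIndepFun
      (fun j : ℕ => fun y : H => (inner ℝ (ψ j) y : ℝ)) P)
    (hlaw : ∀ j : ℕ, P.map (fun y : H => (inner ℝ (ψ j) y : ℝ)) = gaussianReal 0 (σ j)) :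
    ∀ x : H,
      ∫ y, Real.exp (-‖x - y‖ ^ 2 / 2) ∂P
        = (∏' j : ℕ, (1 + (σ j : ℝ))) ^ (-(1:ℝ) / 2)
          * Real.exp (-(1 / 2) * ∑' j : ℕ, (inner ℝ x (ψ j) : ℝ) ^ 2 / (1 + (σ j : ℝ))) :=
  gaussian_kernel_depth_closed_form_general P ψ σ hσsum hindep hlaw
end

section
/- Let H be a separable Hilbert space, Q a probability measure on H with finite second moment, mean m = E[X], and covariance operator Γ(Q). Fix λ > 0 and let V_λ(Q) = {v ∈ H : ‖v‖ = 1, ‖Γ(Q)^{1/2} v‖ ≥ λ}. Define the regularized halfspace depth D_λ(x;Q) = inf_{v ∈ V_λ(Q)} Pr(⟨X − x, v⟩ ≥ 0). If sup_{v ∈ V_λ(Q)} Pr(⟨X − m, v⟩/‖Γ(Q)^{1/2}v‖ ≤ u) < 1 for every u ∈ ℝ, then D_λ(x;Q) > 0 for all x ∈ H. -/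
/-!
The halfspace `{⟪· - x, v⟫ ≥ 0}` in a direction `v ∈ V_λ` contains the upper tail
`{⟪· - m, v⟫ / ‖Γ^{1/2} v‖ > ‖x - m‖ / λ}` of the standardized projection, by Cauchy–Schwarz
and `‖Γ^{1/2} v‖ ≥ λ`. Hence the depth at `x` is at least
`1 - sup_{v ∈ V_λ} Pr(⟪X - m, v⟫ / ‖Γ^{1/2} v‖ ≤ ‖x - m‖ / λ)`, which is positive by assumption.
-/

open MeasureTheory

open scoped RealInnerProductSpace

lemma one_sub_measure_le_measure_compl {α : Type*} [MeasurableSpace α] (μ : Measure α)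
    [IsProbabilityMeasure μ] (s : Set α) : 1 - μ s ≤ μ sᶜ :=
  tsub_le_iff_left.2 (measure_univ (μ := μ) ▸ measure_univ_le_add_compl s)

lemma compl_standardized_sublevel_subset_halfspace {H : Type*} [NormedAddCommGroup H]
    [InnerProductSpace ℝ H] {m x v : H} (hv : ‖v‖ = 1) {c r : ℝ}
    (hc : 0 < c) (hxm : ‖x - m‖ ≤ r * c) :
    {y : H | ⟪y - m, v⟫ / c ≤ r}ᶜ ⊆ {y : H | 0 ≤ ⟪y - x, v⟫} := by
  intro y hy
  have hfar : r * c < ⟪y - m, v⟫ := (lt_div_iff₀ hc).1 (not_le.1 hy)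
  have hcs : ⟪x - m, v⟫ ≤ ‖x - m‖ := by
    simpa only [hv, mul_one] using real_inner_le_norm (x - m) v
  have hsplit : y - x = (y - m) - (x - m) := by abel
  show 0 ≤ ⟪y - x, v⟫
  rw [hsplit, inner_sub_left]
  linarith

lemma le_div_mul_of_le {a lam c : ℝ} (ha : 0 ≤ a) (hlam : 0 < lam) (hc : lam ≤ c) :
    a ≤ a / lam * c :=
  calc a = a / lam * lam := (div_mul_cancel₀ _ hlam.ne').symm
    _ ≤ a / lam * c := by gcongr

theorem regularized_halfspace_depth_nondegenerate_general
    {H : Type*} [NormedAddCommGroup H] [InnerProductSpace ℝ H]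
    [MeasurableSpace H]
    (Q : Measure H) [IsProbabilityMeasure Q]
    (m : H)
    (S : H →L[ℝ] H)  -- the square root `Γ(Q)^{1/2}` of the covariance operator
    (lam : ℝ) (hlam : 0 < lam)
    (htail : ∀ u : ℝ,
      (⨆ v : {v : H // ‖v‖ = 1 ∧ lam ≤ ‖S v‖},
        Q {y | (inner ℝ (y - m) (v : H) : ℝ) / ‖S (v : H)‖ ≤ u}) < 1) :
    ∀ x : H,
      0 < ⨅ v : {v : H // ‖v‖ = 1 ∧ lam ≤ ‖S v‖},
        Q {y | 0 ≤ (inner ℝ (y - x) (v : H) : ℝ)} := by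
  intro x
  set u := ‖x - m‖ / lam
  refine (tsub_pos_of_lt (htail u)).trans_le (le_iInf fun v => ?_)
  obtain ⟨v, hv, hSv⟩ := v
  calc 1 - ⨆ w : {w : H // ‖w‖ = 1 ∧ lam ≤ ‖S w‖}, Q {y | ⟪y - m, w⟫ / ‖S w‖ ≤ u}
      ≤ 1 - Q {y | ⟪y - m, v⟫ / ‖S v‖ ≤ u} :=
        tsub_le_tsub_left (le_iSup (fun w : {w : H // ‖w‖ = 1 ∧ lam ≤ ‖S w‖} =>
          Q {y | ⟪y - m, w⟫ / ‖S w‖ ≤ u}) ⟨v, hv, hSv⟩) 1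
    _ ≤ Q {y | ⟪y - m, v⟫ / ‖S v‖ ≤ u}ᶜ := one_sub_measure_le_measure_compl Q _
    _ ≤ Q {y | 0 ≤ ⟪y - x, v⟫} := measure_mono <|
        compl_standardized_sublevel_subset_halfspace hv (hlam.trans_le hSv)
          (le_div_mul_of_le (norm_nonneg _) hlam hSv)

/-- Nondegeneracy of the regularized halfspace depth: if the standardized
projections in regularized directions have uniformly nondegenerate upper tails,
then the regularized halfspace depth is strictly positive everywhere. -/
theorem regularized_halfspace_depth_nondegenerate
    {H : Type*} [NormedAddCommGroup H] [InnerProductSpace ℝ H] [CompleteSpace H]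
    [TopologicalSpace.SeparableSpace H] [MeasurableSpace H] [BorelSpace H]
    (Q : Measure H) [IsProbabilityMeasure Q]
    (hQmom : Integrable (fun y => ‖y‖ ^ 2) Q)
    (m : H) (hm : m = ∫ y, y ∂Q)
    (S : H →L[ℝ] H)  -- the square root `Γ(Q)^{1/2}` of the covariance operator
    (hS : ∀ v w : H, (inner ℝ (S v) (S w) : ℝ)
      = ∫ y, (inner ℝ (y - m) v : ℝ) * (inner ℝ (y - m) w : ℝ) ∂Q)
    (lam : ℝ) (hlam : 0 < lam)
    (htail : ∀ u : ℝ,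
      (⨆ v : {v : H // ‖v‖ = 1 ∧ lam ≤ ‖S v‖},
        Q {y | (inner ℝ (y - m) (v : H) : ℝ) / ‖S (v : H)‖ ≤ u}) < 1) :
    ∀ x : H,
      0 < ⨅ v : {v : H // ‖v‖ = 1 ∧ lam ≤ ‖S v‖},
        Q {y | 0 ≤ (inner ℝ (y - x) (v : H) : ℝ)} :=
  regularized_halfspace_depth_nondegenerate_general Q m S lam hlam htail
end
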